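/- arXiv:2601.11984 — 11 statements merged into one kernel-verified Lean document; each statement's English description precedes it below -/
import Mathlib

section
/- Let p < q be positive integers and u_1,…,u_ℓ, v words over {p,q}. If v is in the shuffle product u_1 ⧢ u_2 ⧢ ⋯ ⧢ u_ℓ, then the constructed instance admits a feasible schedule. -/
/-- `v` is in the shuffle product `u 0 ⧢ u 1 ⧢ ⋯ ⧢ u (ℓ-1)`. -/
def IsShuffle {α : Type*} {ℓ : ℕ} (u : Fin ℓ → List α) (v : List α) : Prop :=
  ∃ f : (i : Fin ℓ) → Fin (u i).length → Fin v.length,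
    (∀ i, StrictMono (f i)) ∧
    (∀ i x, v.get (f i x) = (u i).get x) ∧
    (∀ i i' x x', i ≠ i' → f i x ≠ f i' x') ∧
    (∀ m : Fin v.length, ∃ i x, f i x = m)

namespace RPA

/-- Jobs of the constructed scheduling instance: `|v| + 1` guard jobs and,
for each word `u i`, one job per letter of `u i`. -/
abbrev Job {ℓ : ℕ} (u : Fin ℓ → List ℕ) (v : List ℕ) : Type :=
  Fin (v.length + 1) ⊕ (Σ i : Fin ℓ, Fin (u i).length)

/-- Release times: `r_{g_i} = p·i + Σ_{k=1}^{i} v[k]` for guard jobs,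
`0` for the letter jobs. -/
def rel {ℓ : ℕ} (p : ℕ) (u : Fin ℓ → List ℕ) (v : List ℕ) : Job u v → ℕ
  | .inl g => p * g.val + (v.take g.val).sum
  | .inr _ => 0

/-- Processing times: `p` for guard jobs, `u_i[j]` for a letter job `x_j^i`. -/
def proc {ℓ : ℕ} (p : ℕ) (u : Fin ℓ → List ℕ) (v : List ℕ) : Job u v → ℕ
  | .inl _ => p
  | .inr x => (u x.1).get x.2

/-- Deadlines: `r_{g_i} + p` for guard jobs, `(|v|+1)·p + Σ_{k=1}^{|v|} v[k]`
for the letter jobs. -/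
def dl {ℓ : ℕ} (p : ℕ) (u : Fin ℓ → List ℕ) (v : List ℕ) : Job u v → ℕ
  | .inl g => p * g.val + (v.take g.val).sum + p
  | .inr _ => (v.length + 1) * p + v.sum

/-- The precedence relation: guard jobs form one chain, and the jobs of each
word `u i` form a chain. -/
def Prec {ℓ : ℕ} (u : Fin ℓ → List ℕ) (v : List ℕ) : Job u v → Job u v → Prop
  | .inl g, .inl g' => g < g'
  | .inr x, .inr x' => x.1 = x'.1 ∧ (x.2 : ℕ) < (x'.2 : ℕ)
  | _, _ => False

/-- A feasible schedule: release times, deadlines, non-overlap and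
precedences are respected. -/
def Feasible {ℓ : ℕ} (p : ℕ) (u : Fin ℓ → List ℕ) (v : List ℕ)
    (σ : Job u v → ℕ) : Prop :=
  (∀ j, rel p u v j ≤ σ j) ∧
  (∀ j, σ j + proc p u v j ≤ dl p u v j) ∧
  (∀ j j', j ≠ j' → σ j' + proc p u v j' ≤ σ j ∨ σ j + proc p u v j ≤ σ j') ∧
  (∀ j j', Prec u v j j' → σ j ≤ σ j')

private lemma sum_take_le_sum_take (v : List ℕ) {a b : ℕ} (hab : a ≤ b) :
    (v.take a).sum ≤ (v.take b).sum := by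
  have h1 : v.take a = (v.take b).take a := by
    rw [List.take_take, Nat.min_eq_left hab]
  rw [h1]
  conv_rhs => rw [← List.take_append_drop a (v.take b)]
  rw [List.sum_append]
  exact Nat.le_add_right _ _

private lemma sum_take_succ' (v : List ℕ) (m : Fin v.length) :
    (v.take (m.val + 1)).sum = (v.take m.val).sum + v.get m := by
  rw [List.take_succ, List.sum_append]
  simp [List.getElem?_eq_getElem m.isLt]

/-- If `v` is in the shuffle product of the `u i`, then the constructed
scheduling instance admits a feasible schedule. -/
theorem feasible_of_shuffle {ℓ : ℕ} (p q : ℕ) (hp : 0 < p) (hpq : p < q)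
    (u : Fin ℓ → List ℕ) (v : List ℕ)
    (hu : ∀ i, ∀ a ∈ u i, a = p ∨ a = q) (hv : ∀ a ∈ v, a = p ∨ a = q)
    (hsh : IsShuffle u v) :
    ∃ σ : Job u v → ℕ, Feasible p u v σ := by
  obtain ⟨f, hmono, hget, hdiff, -⟩ := hsh
  set S : ℕ → ℕ := fun a => (v.take a).sum with hSdef
  have hSmono : ∀ {a b : ℕ}, a ≤ b → S a ≤ S b := fun h => sum_take_le_sum_take v h
  have hSsucc : ∀ m : Fin v.length, S (m.val + 1) = S m.val + v.get m :=
    fun m => sum_take_succ' v m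
  have hSlen : S v.length = v.sum := by simp [hSdef]
  refine ⟨fun j => match j with
    | .inl g => p * g.val + S g.val
    | .inr x => p * ((f x.1 x.2).val + 1) + S (f x.1 x.2).val, ?_, ?_, ?_, ?_⟩
  · rintro (g | ⟨i, x⟩)
    · exact le_refl _
    · exact Nat.zero_le _
  · rintro (g | ⟨i, x⟩)
    · simp only [proc, dl]; simp only [hSdef]; omega
    · simp only [proc, dl]
      set m := f i x with hm
      have hpm : (u i).get x = v.get m := (hget i x).symm
      have h1 : p * (m.val + 1) + S m.val + v.get m = p * (m.val + 1) + S (m.val + 1) := by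
        rw [hSsucc m]; ring
      rw [hpm, h1]
      have h2 : m.val + 1 ≤ v.length := m.isLt
      have h3 : p * (m.val + 1) ≤ p * v.length := Nat.mul_le_mul_left p h2
      have h4 : S (m.val + 1) ≤ S v.length := hSmono h2
      have h5 : p * v.length ≤ (v.length + 1) * p := by nlinarith
      omega
  · rintro (g | ⟨i, x⟩) (g' | ⟨i', x'⟩) hne
    · -- guard vs guard
      simp only [proc]
      have hgg : g.val ≠ g'.val := fun h => hne (congrArg Sum.inl (Fin.ext h))
      rcases Nat.lt_or_ge g.val g'.val with h | h
      · right
        have h1 : p * g.val + p ≤ p * g'.val := by nlinarith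
        have h2 : S g.val ≤ S g'.val := hSmono (le_of_lt h)
        omega
      · left
        have hlt : g'.val < g.val := lt_of_le_of_ne h (Ne.symm hgg)
        have h1 : p * g'.val + p ≤ p * g.val := by nlinarith
        have h2 : S g'.val ≤ S g.val := hSmono (le_of_lt hlt)
        omega
    · -- guard vs letter
      simp only [proc]
      set m := f i' x' with hm
      have hpm : (u i').get x' = v.get m := (hget i' x').symm
      rw [hpm]
      rcases Nat.lt_or_ge m.val g.val with h | h
      · left
        have h1 : p * (m.val + 1) + S m.val + v.get m
            = p * (m.val + 1) + S (m.val + 1) := by rw [hSsucc m]; ring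
        rw [h1]
        have h2 : p * (m.val + 1) ≤ p * g.val := Nat.mul_le_mul_left p h
        have h3 : S (m.val + 1) ≤ S g.val := hSmono h
        omega
      · right
        have h2 : p * g.val + p ≤ p * (m.val + 1) := by nlinarith
        have h3 : S g.val ≤ S m.val := hSmono h
        omega
    · -- letter vs guard
      simp only [proc]
      set m := f i x with hm
      have hpm : (u i).get x = v.get m := (hget i x).symm
      rw [hpm]
      rcases Nat.lt_or_ge m.val g'.val with h | h
      · right
        have h1 : p * (m.val + 1) + S m.val + v.get m
            = p * (m.val + 1) + S (m.val + 1) := by rw [hSsucc m]; ring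
        rw [h1]
        have h2 : p * (m.val + 1) ≤ p * g'.val := Nat.mul_le_mul_left p h
        have h3 : S (m.val + 1) ≤ S g'.val := hSmono h
        omega
      · left
        have h2 : p * g'.val + p ≤ p * (m.val + 1) := by nlinarith
        have h3 : S g'.val ≤ S m.val := hSmono h
        omega
    · -- letter vs letter
      simp only [proc]
      set m := f i x with hm
      set m' := f i' x' with hm'
      have hpm : (u i).get x = v.get m := (hget i x).symm
      have hpm' : (u i').get x' = v.get m' := (hget i' x').symm
      rw [hpm, hpm']
      have hmm : m ≠ m' := by
        rcases eq_or_ne i i' with rfl | hii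
        · have hxx : x ≠ x' := by
            intro h; exact hne (by rw [h])
          exact fun h => hxx ((hmono i).injective h)
        · exact hdiff i i' x x' hii
      have hmm' : m.val ≠ m'.val := fun h => hmm (Fin.ext h)
      rcases Nat.lt_or_ge m.val m'.val with h | h
      · right
        have h1 : p * (m.val + 1) + S m.val + v.get m
            = p * (m.val + 1) + S (m.val + 1) := by rw [hSsucc m]; ring
        rw [h1]
        have h2 : p * (m.val + 1) ≤ p * (m'.val + 1) := by
          exact Nat.mul_le_mul_left p (by omega)
        have h3 : S (m.val + 1) ≤ S m'.val := hSmono h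
        omega
      · left
        have hlt : m'.val < m.val := lt_of_le_of_ne h (Ne.symm hmm')
        have h1 : p * (m'.val + 1) + S m'.val + v.get m'
            = p * (m'.val + 1) + S (m'.val + 1) := by rw [hSsucc m']; ring
        rw [h1]
        have h2 : p * (m'.val + 1) ≤ p * (m.val + 1) := by
          exact Nat.mul_le_mul_left p (by omega)
        have h3 : S (m'.val + 1) ≤ S m.val := hSmono hlt
        omega
  · rintro (g | ⟨i, x⟩) (g' | ⟨i', x'⟩) hprec
    · dsimp only
      have h : g < g' := hprec
      have h1 : p * g.val ≤ p * g'.val := Nat.mul_le_mul_left p (le_of_lt h)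
      have h2 : S g.val ≤ S g'.val := hSmono (le_of_lt h)
      omega
    · exact absurd hprec id
    · exact absurd hprec id
    · obtain ⟨hii, hxx⟩ := hprec
      subst hii
      show p * ((f i x).val + 1) + S (f i x).val ≤ p * ((f i x').val + 1) + S (f i x').val
      have h : f i x < f i x' := hmono i (by exact hxx)
      have h1 : p * ((f i x).val + 1) ≤ p * ((f i x').val + 1) :=
        Nat.mul_le_mul_left p (by omega)
      have h2 : S (f i x).val ≤ S (f i x').val := hSmono (le_of_lt h)
      omega

end RPA
end

section
/- Let p < q be positive integers and u_1,…,u_ℓ, v words over {p,q} such that for each letter a ∈ {p,q} the number of occurrences of a in v equals the sum over i of the number of occurrences of a in u_i. If the constructed instance admits a feasible schedule, then v is in the shuffle product u_1 ⧢ u_2 ⧢ ⋯ ⧢ u_ℓ. -/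
namespace RPA

/-- Counting a letter equals counting positions carrying that letter. -/
lemma count_card (w : List ℕ) (a : ℕ) :
    w.count a = (Finset.univ.filter (fun j : Fin w.length => w.get j = a)).card := by
  rw [Finset.card_filter]
  calc w.count a = (w.map (fun x => if x = a then (1:ℕ) else 0)).sum := by
        induction w with
        | nil => simp
        | cons b w ih => by_cases hb : b = a <;> simp [List.count_cons, hb, ih] <;> omega
    _ = ∑ j : Fin w.length, (if w.get j = a then 1 else 0) := by
        rw [← Fin.sum_univ_getElem]
        exact (Fintype.sum_equiv (finCongr (by simp)) _ _ (by
          intro j; simp [List.getElem_map])).symm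

lemma two_letter_sum {p q : ℕ} (hpq : p ≠ q) (w : List ℕ)
    (hw : ∀ a ∈ w, a = p ∨ a = q) :
    w.sum = p * w.count p + q * w.count q := by
  induction w with
  | nil => simp
  | cons b w ih =>
    have hb := hw b (by simp)
    have ih' := ih (fun a ha => hw a (by simp [ha]))
    rcases hb with rfl | rfl <;>
      simp [List.count_cons, ih', hpq, Ne.symm hpq] <;> ring

lemma two_letter_length {p q : ℕ} (hpq : p ≠ q) (w : List ℕ)
    (hw : ∀ a ∈ w, a = p ∨ a = q) :
    w.length = w.count p + w.count q := by
  induction w with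
  | nil => simp
  | cons b w ih =>
    have hb := hw b (by simp)
    have ih' := ih (fun a ha => hw a (by simp [ha]))
    rcases hb with rfl | rfl <;>
      simp [List.count_cons, ih', hpq, Ne.symm hpq] <;> omega

/-- If every letter of `{p,q}` occurs in `v` as often as in the `u i`
combined, and the constructed scheduling instance admits a feasible
schedule, then `v` is in the shuffle product of the `u i`. -/
theorem shuffle_of_feasible {ℓ : ℕ} (p q : ℕ) (hp : 0 < p) (hpq : p < q)
    (u : Fin ℓ → List ℕ) (v : List ℕ)
    (hu : ∀ i, ∀ a ∈ u i, a = p ∨ a = q) (hv : ∀ a ∈ v, a = p ∨ a = q)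
    (hcp : v.count p = ∑ i : Fin ℓ, (u i).count p)
    (hcq : v.count q = ∑ i : Fin ℓ, (u i).count q)
    (hfeas : ∃ σ : Job u v → ℕ, Feasible p u v σ) :
    IsShuffle u v := by
  classical
  obtain ⟨σ, hrel, hdl, hno, hprec⟩ := hfeas
  -- the start of guard `k` (reading `k ≤ v.length`)
  set R : ℕ → ℕ := fun k => p * k + (v.take k).sum with hR
  have hRsucc : ∀ k, ∀ hk : k < v.length, R (k+1) = R k + p + v.get ⟨k, hk⟩ := by
    intro k hk
    simp only [hR, List.sum_take_succ v k hk, List.get_eq_getElem]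
    ring
  have hRmono : Monotone R := by
    apply monotone_nat_of_le_succ
    intro k
    by_cases hk : k < v.length
    · rw [hRsucc k hk]; omega
    · simp only [hR]
      rw [List.take_of_length_le (by omega), List.take_of_length_le (by omega)]
      have : p * (k + 1) = p * k + p := by ring
      omega
  have hRn : R v.length = p * v.length + v.sum := by
    simp [hR, List.take_of_length_le (le_refl v.length)]
  -- guard jobs are fixed
  have hguard : ∀ g : Fin (v.length+1), σ (.inl g) = R g.val := by
    intro g
    have h1 := hrel (.inl g)
    have h2 := hdl (.inl g)
    simp only [rel, dl, proc] at h1 h2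
    simp only [hR]; omega
  have hguard0 : σ (.inl 0) = 0 := by simpa [hR] using hguard 0
  -- letter jobs
  set pr : (Σ i : Fin ℓ, Fin (u i).length) → ℕ := fun x => (u x.1).get x.2 with hprdef
  have hprX : ∀ x : (Σ i : Fin ℓ, Fin (u i).length),
      proc p u v (.inr x) = pr x := fun _ => rfl
  have hpr_mem : ∀ x, pr x = p ∨ pr x = q := fun x => hu x.1 _ (List.get_mem _ _)
  have hpr_pos : ∀ x, p ≤ pr x := by intro x; rcases hpr_mem x with h | h <;> omega
  have hlb0 : ∀ x, p ≤ σ (.inr x) := by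
    intro x
    rcases hno (.inr x) (.inl 0) (by simp) with h | h
    · have h' : σ (.inl 0) + p ≤ σ (.inr x) := h
      omega
    · exfalso
      have h' : σ (.inr x) + pr x ≤ σ (.inl 0) := h
      have h2 := hpr_pos x
      rw [hguard0] at h'
      omega
  -- the gap of a letter job
  set M : (Σ i : Fin ℓ, Fin (u i).length) → ℕ :=
    fun x => Nat.findGreatest (fun k => R k + p ≤ σ (.inr x)) v.length with hM
  have hM1 : ∀ x, R (M x) + p ≤ σ (.inr x) := by
    intro x
    have key : (fun k => R k + p ≤ σ (.inr x))
        (Nat.findGreatest (fun k => R k + p ≤ σ (.inr x)) v.length) :=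
      Nat.findGreatest_spec (P := fun k => R k + p ≤ σ (.inr x)) (m := 0)
        (Nat.zero_le v.length)
        (by show R 0 + p ≤ σ (.inr x); simpa [hR] using hlb0 x)
    exact key
  have hdlx : ∀ x, σ (.inr x) + pr x ≤ R v.length + p := by
    intro x
    have h : σ (.inr x) + pr x ≤ (v.length + 1) * p + v.sum := hdl (.inr x)
    have e : (v.length + 1) * p = p * v.length + p := by ring
    rw [hRn]
    omega
  have hMlt : ∀ x, M x < v.length := by
    intro x
    by_contra hcon
    have hle : Nat.findGreatest (fun k => R k + p ≤ σ (.inr x)) v.length ≤ v.length :=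
      Nat.findGreatest_le v.length
    have hle' : M x ≤ v.length := hle
    have h : M x = v.length := by omega
    have h1 := hM1 x
    rw [h] at h1
    have h2 := hdlx x
    have h3 := hpr_pos x
    omega
  have hub : ∀ x, σ (.inr x) + pr x ≤ R (M x + 1) := by
    intro x
    have hlt : M x + 1 ≤ v.length := hMlt x
    have hg : σ (.inl ⟨M x + 1, by omega⟩) = R (M x + 1) := hguard _
    rcases hno (.inr x) (.inl ⟨M x + 1, by omega⟩) (by simp) with h | h
    · exfalso
      have h' : σ (.inl ⟨M x + 1, by omega⟩) + p ≤ σ (.inr x) := h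
      rw [hg] at h'
      have hgr : ¬ (fun k => R k + p ≤ σ (Sum.inr x)) (M x + 1) :=
        Nat.findGreatest_is_greatest (P := fun k => R k + p ≤ σ (Sum.inr x))
          (Nat.lt_succ_self (M x)) hlt
      exact hgr h'
    · have h' : σ (.inr x) + pr x ≤ σ (.inl ⟨M x + 1, by omega⟩) := h
      rw [hg] at h'
      exact h' 
  set gap : (Σ i : Fin ℓ, Fin (u i).length) → Fin v.length :=
    fun x => ⟨M x, hMlt x⟩ with hgap
  -- fibers of the gap map
  set S : Fin v.length → Finset (Σ i : Fin ℓ, Fin (u i).length) :=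
    fun m => Finset.univ.filter (fun x => gap x = m) with hS
  set T : (Σ i : Fin ℓ, Fin (u i).length) → Finset ℕ :=
    fun x => Finset.Ico (σ (.inr x)) (σ (.inr x) + pr x) with hT
  have hTcard : ∀ x, (T x).card = pr x := by intro x; simp [hT]
  have hTdisj : ∀ x y, x ≠ y → Disjoint (T x) (T y) := by
    intro x y hxy
    have hne : (Sum.inr x : Job u v) ≠ .inr y := by simpa using hxy
    rw [Finset.disjoint_left]
    intro t ht1 ht2
    simp only [hT, Finset.mem_Ico] at ht1 ht2
    rcases hno (.inr x) (.inr y) hne with h | h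
    · have h' : σ (.inr y) + pr y ≤ σ (.inr x) := h
      omega
    · have h' : σ (.inr x) + pr x ≤ σ (.inr y) := h
      omega
  have hfiber_le : ∀ m : Fin v.length, ∑ x ∈ S m, pr x ≤ v.get m := by
    intro m
    have hsub : ∀ x ∈ S m, T x ⊆ Finset.Ico (R m.val + p) (R m.val + p + v.get m) := by
      intro x hx
      have hgx : gap x = m := by simpa [hS] using hx
      have hMx : M x = m.val := congrArg Fin.val hgx
      have h1 := hM1 x
      have h2 := hub x
      have h3 : R (M x + 1) = R (M x) + p + v.get ⟨M x, hMlt x⟩ := hRsucc _ _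
      have h4 : v.get ⟨M x, hMlt x⟩ = v.get m := congrArg v.get hgx
      have hr : R (M x) = R m.val := by rw [hMx]
      intro t ht
      simp only [hT, Finset.mem_Ico] at ht ⊢
      omega
    calc ∑ x ∈ S m, pr x = ∑ x ∈ S m, (T x).card :=
          Finset.sum_congr rfl fun x _ => (hTcard x).symm
      _ = ((S m).biUnion T).card :=
          (Finset.card_biUnion (fun x _ y _ h => hTdisj x y h)).symm
      _ ≤ (Finset.Ico (R m.val + p) (R m.val + p + v.get m)).card :=
          Finset.card_le_card (Finset.biUnion_subset.mpr hsub)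
      _ = v.get m := by simp
  -- total processing equals total gap length
  have htot : ∑ x : (Σ i : Fin ℓ, Fin (u i).length), pr x = v.sum := by
    have h1 : ∑ x : (Σ i : Fin ℓ, Fin (u i).length), pr x
        = ∑ i : Fin ℓ, (u i).sum := by
      rw [← Finset.univ_sigma_univ, Finset.sum_sigma]
      exact Finset.sum_congr rfl fun i _ => by
        show (∑ j : Fin (u i).length, (u i).get j) = (u i).sum
        simp
    have h2 : v.sum = ∑ i : Fin ℓ, (u i).sum := by
      rw [two_letter_sum hpq.ne v hv, hcp, hcq, Finset.mul_sum, Finset.mul_sum,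
        ← Finset.sum_add_distrib]
      exact Finset.sum_congr rfl fun i _ => (two_letter_sum hpq.ne (u i) (hu i)).symm
    omega
  have hsum_gaps : ∑ m : Fin v.length, v.get m = v.sum := by
    simpa using Fin.sum_univ_get v
  have hpart : ∑ m : Fin v.length, ∑ x ∈ S m, pr x
      = ∑ x : (Σ i : Fin ℓ, Fin (u i).length), pr x :=
    Finset.sum_fiberwise_of_maps_to (fun x _ => Finset.mem_univ (gap x)) pr
  have hfiber_eq : ∀ m : Fin v.length, ∑ x ∈ S m, pr x = v.get m := by
    by_contra h
    push_neg at h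
    obtain ⟨m0, hm0⟩ := h
    have hlt : ∑ x ∈ S m0, pr x < v.get m0 := lt_of_le_of_ne (hfiber_le m0) hm0
    have : ∑ m : Fin v.length, ∑ x ∈ S m, pr x < ∑ m : Fin v.length, v.get m :=
      Finset.sum_lt_sum (fun m _ => hfiber_le m) ⟨m0, Finset.mem_univ _, hlt⟩
    omega
  have hmemS : ∀ x, x ∈ S (gap x) := by intro x; simp [hS]
  have hsingle : ∀ x, pr x ≤ v.get (gap x) := by
    intro x
    rw [← hfiber_eq (gap x)]
    exact Finset.single_le_sum (fun _ _ => Nat.zero_le _) (hmemS x)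
  have hv_get : ∀ m : Fin v.length, v.get m = p ∨ v.get m = q :=
    fun m => hv _ (List.get_mem _ _)
  have hpair : ∀ x y, x ≠ y → gap x = gap y → pr x + pr y ≤ v.get (gap x) := by
    intro x y hxy hg
    have hsub2 : ({x, y} : Finset _) ⊆ S (gap x) := by
      intro z hz
      simp only [Finset.mem_insert, Finset.mem_singleton] at hz
      rcases hz with rfl | rfl
      · exact hmemS z
      · rw [hg]; exact hmemS z
    calc pr x + pr y = ∑ z ∈ ({x, y} : Finset _), pr z := (Finset.sum_pair hxy).symm
      _ ≤ ∑ z ∈ S (gap x), pr z := Finset.sum_le_sum_of_subset hsub2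
      _ = v.get (gap x) := hfiber_eq _
  -- counting the `q`-jobs
  set Xq : Finset (Σ i : Fin ℓ, Fin (u i).length) :=
    Finset.univ.filter (fun x => pr x = q) with hXq
  set Gq : Finset (Fin v.length) :=
    Finset.univ.filter (fun m => v.get m = q) with hGq
  have hgapq : ∀ x ∈ Xq, gap x ∈ Gq := by
    intro x hx
    simp only [hXq, Finset.mem_filter, Finset.mem_univ, true_and] at hx
    simp only [hGq, Finset.mem_filter, Finset.mem_univ, true_and]
    have h1 := hsingle x
    rcases hv_get (gap x) with h | h
    · omega
    · exact h
  have hinjq : Set.InjOn gap Xq := by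
    intro x hx y hy hxy
    by_contra hne
    have h1 := hpair x y hne hxy
    simp only [hXq, Finset.coe_filter, Set.mem_setOf_eq, Finset.mem_univ, true_and] at hx hy
    have h2 := hsingle x
    rcases hv_get (gap x) with h | h <;> omega
  have hcardXq : Xq.card = v.count q := by
    rw [hcq, hXq, Finset.card_filter, ← Finset.univ_sigma_univ, Finset.sum_sigma]
    exact Finset.sum_congr rfl fun i _ => by
      rw [count_card (u i) q, Finset.card_filter]
  have hcardGq : Gq.card = v.count q := (count_card v q).symm
  have himage : Xq.image gap = Gq := by
    apply Finset.eq_of_subset_of_card_le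
    · intro m hm
      rw [Finset.mem_image] at hm
      obtain ⟨x, hx, rfl⟩ := hm
      exact hgapq x hx
    · rw [Finset.card_image_of_injOn hinjq, hcardXq, hcardGq]
  have hsurjq : ∀ m : Fin v.length, v.get m = q → ∃ x, pr x = q ∧ gap x = m := by
    intro m hm
    have hmem : m ∈ Gq := by
      simp only [hGq, Finset.mem_filter, Finset.mem_univ, true_and]; exact hm
    rw [← himage, Finset.mem_image] at hmem
    obtain ⟨x, hx, hgx⟩ := hmem
    simp only [hXq, Finset.mem_filter, Finset.mem_univ, true_and] at hx
    exact ⟨x, hx, hgx⟩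
  -- every job exactly fills its gap
  have hproc_get : ∀ x, pr x = v.get (gap x) := by
    intro x
    rcases hpr_mem x with hx | hx
    · rcases hv_get (gap x) with h | h
      · omega
      · exfalso
        obtain ⟨x0, hx0q, hx0g⟩ := hsurjq (gap x) h
        have hne : x ≠ x0 := by
          intro e; rw [e, hx0q] at hx; omega
        have hp2 := hpair x x0 hne hx0g.symm
        omega
    · have h1 := hsingle x
      rcases hv_get (gap x) with h | h <;> omega
  have hginj : Function.Injective gap := by
    intro x y hxy
    by_contra hne
    have h2 := hpair x y hne hxy
    have h3 := hproc_get x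
    have h4 := hproc_get y
    rw [hxy] at h3
    have h5 := hpr_pos x
    rw [← hxy] at h4
    omega
  -- cardinalities match, whence bijectivity
  have hcardX : Fintype.card (Σ i : Fin ℓ, Fin (u i).length) = v.length := by
    rw [Fintype.card_sigma]
    have h1 : ∀ i : Fin ℓ, Fintype.card (Fin (u i).length)
        = (u i).count p + (u i).count q := by
      intro i
      rw [Fintype.card_fin]
      exact two_letter_length hpq.ne _ (hu i)
    calc ∑ i : Fin ℓ, Fintype.card (Fin (u i).length)
        = ∑ i : Fin ℓ, ((u i).count p + (u i).count q) :=
          Finset.sum_congr rfl fun i _ => h1 i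
      _ = v.count p + v.count q := by rw [Finset.sum_add_distrib, hcp, hcq]
      _ = v.length := (two_letter_length hpq.ne v hv).symm
  have hgbij : Function.Bijective gap := by
    rw [Fintype.bijective_iff_injective_and_card]
    exact ⟨hginj, by rw [hcardX, Fintype.card_fin]⟩
  -- the chains appear in order
  have horder : ∀ (i : Fin ℓ) (j j' : Fin (u i).length), (j : ℕ) < j' →
      gap ⟨i, j⟩ < gap ⟨i, j'⟩ := by
    intro i j j' hjj
    have hxy : (⟨i, j⟩ : Σ i : Fin ℓ, Fin (u i).length) ≠ ⟨i, j'⟩ := by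
      intro e
      have := congrArg (fun z : (Σ i : Fin ℓ, Fin (u i).length) => (z.2 : ℕ)) e
      simp only at this
      omega
    have hp1 : σ (.inr ⟨i, j⟩) ≤ σ (.inr ⟨i, j'⟩) := hprec _ _ ⟨rfl, hjj⟩
    have hsep : σ (.inr ⟨i, j⟩) + pr ⟨i, j⟩ ≤ σ (.inr ⟨i, j'⟩) := by
      rcases hno (.inr ⟨i, j'⟩) (.inr ⟨i, j⟩) (by simpa using hxy.symm) with h | h
      · exact h
      · exfalso
        have h' : σ (.inr ⟨i, j'⟩) + pr ⟨i, j'⟩ ≤ σ (.inr ⟨i, j⟩) := h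
        have := hpr_pos ⟨i, j'⟩
        omega
    by_contra hle
    push_neg at hle
    have hne2 : gap ⟨i, j⟩ ≠ gap ⟨i, j'⟩ := fun e => hxy (hginj e)
    have hlt2 : gap ⟨i, j'⟩ < gap ⟨i, j⟩ := lt_of_le_of_ne hle (fun e => hne2 e.symm)
    have hvlt : M ⟨i, j'⟩ + 1 ≤ M ⟨i, j⟩ := hlt2
    have hmono := hRmono hvlt
    have h1 := hub ⟨i, j'⟩
    have h2 := hM1 ⟨i, j⟩
    have h3 := hpr_pos ⟨i, j'⟩
    have h4 := hpr_pos ⟨i, j⟩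
    omega
  -- assemble the shuffle
  refine ⟨fun i j => gap ⟨i, j⟩, ?_, ?_, ?_, ?_⟩
  · intro i j j' h
    exact horder i j j' h
  · intro i j
    exact (hproc_get ⟨i, j⟩).symm
  · intro i i' j j' hii e
    exact hii (congrArg Sigma.fst (hginj e))
  · intro m
    obtain ⟨x, hx⟩ := hgbij.2 m
    exact ⟨x.1, x.2, hx⟩

end RPA
end

section
/- Let p < q be positive integers and u_1,…,u_ℓ, v words over {p,q} such that for each letter a ∈ {p,q} the number of occurrences of a in v equals the sum over i of the number of occurrences of a in u_i, and let σ be a feasible schedule of the constructed instance. Then every guard job starts exactly at its release time (σ_{g_i} = r_{g_i} for all i ∈ {0,…,|v|}), and for every i ∈ {1,…,|v|} exactly one non-guard job is scheduled in the i-th time slot [r_{g_{i−1}} + p, r_{g_i}), this job is processed entirely within that slot, and its processing time equals v[i]. -/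
namespace RPA


def Astart (p : ℕ) (v : List ℕ) (i : ℕ) : ℕ := p * i + (v.take i).sum

lemma Astart_succ (p : ℕ) (v : List ℕ) (i : ℕ) (h : i < v.length) :
    Astart p v (i + 1) = Astart p v i + p + v.get ⟨i, h⟩ := by
  simp only [Astart, List.sum_take_succ v i h, List.get_eq_getElem]
  ring

lemma Astart_step (p : ℕ) (v : List ℕ) (i : ℕ) :
    Astart p v i + p ≤ Astart p v (i + 1) := by
  rcases lt_or_ge i v.length with h | h
  · rw [Astart_succ p v i h]; omega
  · simp only [Astart, List.take_of_length_le h, List.take_of_length_le (by omega : v.length ≤ i + 1)]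
    rw [Nat.mul_succ]; omega

lemma Astart_mono (p : ℕ) (v : List ℕ) : Monotone (Astart p v) :=
  monotone_nat_of_le_succ fun i => le_trans (Nat.le_add_right _ p) (Astart_step p v i)

lemma count_eq_sum_map (a : ℕ) : ∀ l : List ℕ,
    (l.map fun b => if b = a then 1 else 0).sum = l.count a
  | [] => by simp
  | b :: l => by
    by_cases h : b = a <;>
      simp [List.count_cons, count_eq_sum_map a l, h] <;> omega

lemma sum_pq_count {p q : ℕ} (hpq : p ≠ q) :
    ∀ l : List ℕ, (∀ a ∈ l, a = p ∨ a = q) → l.sum = p * l.count p + q * l.count q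
  | [], _ => by simp
  | a :: l, h => by
    have hl := sum_pq_count hpq l (fun b hb => h b (List.mem_cons_of_mem _ hb))
    rcases h a (List.mem_cons_self) with rfl | rfl
    · simp [List.count_cons, hl, hpq, Ne.symm hpq]; ring
    · simp [List.count_cons, hl, hpq, Ne.symm hpq]; ring

lemma pack {X : Type*} [DecidableEq X] (st wd : X → ℕ) :
    ∀ (n : ℕ) (S : Finset X), S.card = n →
    ∀ A B : ℕ, (∀ x ∈ S, 1 ≤ wd x) →
    (∀ x ∈ S, ∀ y ∈ S, x ≠ y → st x + wd x ≤ st y ∨ st y + wd y ≤ st x) →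
    (∀ x ∈ S, A ≤ st x) → (∀ x ∈ S, st x + wd x ≤ B) →
    ∑ x ∈ S, wd x ≤ B - A := by
  intro n
  induction n with
  | zero => intro S hS A B _ _ _ _; rw [Finset.card_eq_zero] at hS; simp [hS]
  | succ n ih =>
    intro S hS A B h1 h2 hA hB
    have hne : S.Nonempty := by rw [← Finset.card_pos, hS]; omega
    obtain ⟨x0, hx0, hmin⟩ := S.exists_min_image st hne
    have hsplit : ∀ y ∈ S.erase x0, st x0 + wd x0 ≤ st y := by
      intro y hy
      have hyS := Finset.mem_of_mem_erase hy
      have hne' := Finset.ne_of_mem_erase hy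
      rcases h2 x0 hx0 y hyS (Ne.symm hne') with h | h
      · exact h
      · have := hmin y hyS; have := h1 y hyS; omega
    have hih := ih (S.erase x0) (by simp [Finset.card_erase_of_mem hx0, hS])
        (st x0 + wd x0) B (fun x hx => h1 x (Finset.mem_of_mem_erase hx))
        (fun x hx y hy hxy => h2 _ (Finset.mem_of_mem_erase hx) _ (Finset.mem_of_mem_erase hy) hxy)
        hsplit (fun x hx => hB x (Finset.mem_of_mem_erase hx))
    have hsum : ∑ x ∈ S, wd x = wd x0 + ∑ x ∈ S.erase x0, wd x :=
      (Finset.add_sum_erase S wd hx0).symm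
    have hxB := hB x0 hx0
    have hxA := hA x0 hx0
    omega


abbrev LJob (ℓ : ℕ) (u : Fin ℓ → List ℕ) : Type := Σ i : Fin ℓ, Fin (u i).length


/-- In any feasible schedule of the constructed instance (with matching
letter counts), every guard job starts exactly at its release time; and for
every `i ∈ {1,…,|v|}` exactly one non-guard job starts in the `i`-th time
slot `[r_{g_{i-1}} + p, r_{g_i})`, every non-guard job starting in that slot
is processed entirely within the slot and has processing time `v[i]`.
(Below the slot index `i ∈ {1,…,|v|}` is represented by `ii : Fin v.length`
with `ii = i - 1`, so the slot is `[r_{g_{ii}} + p, r_{g_{ii+1}})`.) -/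
theorem guards_tight_and_slots {ℓ : ℕ} (p q : ℕ) (hp : 0 < p) (hpq : p < q)
    (u : Fin ℓ → List ℕ) (v : List ℕ)
    (hu : ∀ i, ∀ a ∈ u i, a = p ∨ a = q) (hv : ∀ a ∈ v, a = p ∨ a = q)
    (hcp : v.count p = ∑ i : Fin ℓ, (u i).count p)
    (hcq : v.count q = ∑ i : Fin ℓ, (u i).count q)
    (σ : Job u v → ℕ) (hfeas : Feasible p u v σ) :
    (∀ g : Fin (v.length + 1), σ (.inl g) = p * g.val + (v.take g.val).sum) ∧
    (∀ ii : Fin v.length,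
      (∃! x : Σ i : Fin ℓ, Fin (u i).length,
          p * ii.val + (v.take ii.val).sum + p ≤ σ (.inr x) ∧
          σ (.inr x) < p * (ii.val + 1) + (v.take (ii.val + 1)).sum) ∧
      (∀ x : Σ i : Fin ℓ, Fin (u i).length,
          p * ii.val + (v.take ii.val).sum + p ≤ σ (.inr x) →
          σ (.inr x) < p * (ii.val + 1) + (v.take (ii.val + 1)).sum →
          σ (.inr x) + proc p u v (.inr x) ≤
              p * (ii.val + 1) + (v.take (ii.val + 1)).sum ∧
          proc p u v (.inr x) = v.get ii)) := by
  classical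
  obtain ⟨hrel, hdl, hnov, hprec⟩ := hfeas
  set w : LJob ℓ u → ℕ := fun x => (u x.1).get x.2 with hwdef
  have hww : ∀ x : LJob ℓ u, proc p u v (.inr x) = w x := fun _ => rfl
  have hA0 : Astart p v 0 = 0 := by simp [Astart]
  -- guards are tight
  have hguard : ∀ g : Fin (v.length + 1), σ (.inl g) = Astart p v g.val := by
    intro g
    have h1 := hrel (.inl g)
    have h2 := hdl (.inl g)
    simp only [rel, dl, proc] at h1 h2
    simp only [Astart]
    omega
  have hw_cases : ∀ x : LJob ℓ u, w x = p ∨ w x = q := by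
    intro x
    have : (u x.1).get x.2 ∈ u x.1 := List.get_mem _ _
    exact hu x.1 _ this
  have hwp : ∀ x : LJob ℓ u, p ≤ w x := by
    intro x; rcases hw_cases x with h | h <;> omega
  have hl0 : (0 : ℕ) < v.length + 1 := Nat.succ_pos _
  -- each letter job sits in some slot
  have hslot : ∀ x : LJob ℓ u, ∃ ii : Fin v.length,
      Astart p v ii.val + p ≤ σ (.inr x) ∧ σ (.inr x) + w x ≤ Astart p v (ii.val + 1) := by
    intro x
    have hwwx := hww x
    have hwx := hwp x
    have hT : σ (.inr x) + w x ≤ Astart p v v.length + p := by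
      have h := hdl (.inr x)
      simp only [dl] at h
      have hAl : Astart p v v.length = p * v.length + v.sum := by
        simp [Astart, List.take_length]
      have hmul : (v.length + 1) * p = p * v.length + p := by ring
      omega
    have h0 : p ≤ σ (.inr x) := by
      have hg0 := hguard ⟨0, hl0⟩
      rw [show ((⟨0, hl0⟩ : Fin (v.length + 1)) : ℕ) = 0 from rfl, hA0] at hg0
      have hgp : proc p u v (.inl ⟨0, hl0⟩) = p := rfl
      rcases hnov (.inr x) (.inl ⟨0, hl0⟩) (by simp) with h | h
      · omega
      · exfalso; omega
    have hP0 : Astart p v 0 + p ≤ σ (.inr x) := by omega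
    have hspec := Nat.findGreatest_spec (P := fun i => Astart p v i + p ≤ σ (.inr x))
      (m := 0) (n := v.length) (Nat.zero_le _) hP0
    set i0 := Nat.findGreatest (fun i => Astart p v i + p ≤ σ (.inr x)) v.length
      with hi0def
    have hi0 : Astart p v i0 + p ≤ σ (.inr x) := hspec
    have hi0le : i0 ≤ v.length := Nat.findGreatest_le _
    have hi0lt : i0 < v.length := by
      rcases eq_or_lt_of_le hi0le with h | h
      · exfalso; rw [h] at hi0; omega
      · exact h
    refine ⟨⟨i0, hi0lt⟩, hi0, ?_⟩
    show σ (.inr x) + w x ≤ Astart p v (i0 + 1)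
    have hng : ¬ (Astart p v (i0 + 1) + p ≤ σ (.inr x)) :=
      Nat.findGreatest_is_greatest (P := fun i => Astart p v i + p ≤ σ (.inr x))
        (n := v.length) (k := i0 + 1) (Nat.lt_succ_self i0) (by omega)
    have hl1 : i0 + 1 < v.length + 1 := by omega
    have hg1 := hguard ⟨i0 + 1, hl1⟩
    rw [show ((⟨i0 + 1, hl1⟩ : Fin (v.length + 1)) : ℕ) = i0 + 1 from rfl] at hg1
    have hgp1 : proc p u v (.inl ⟨i0 + 1, hl1⟩) = p := rfl
    rcases hnov (.inr x) (.inl ⟨i0 + 1, hl1⟩) (by simp) with h | h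
    · exfalso; omega
    · omega
  choose slotOf hslot1 hslot2 using hslot
  -- uniqueness of the slot
  have hslot_uniq : ∀ (x : LJob ℓ u) (jj : Fin v.length),
      Astart p v jj.val + p ≤ σ (.inr x) →
      σ (.inr x) < Astart p v (jj.val + 1) → slotOf x = jj := by
    intro x jj h1 h2
    by_contra hne
    have hvne : (slotOf x : ℕ) ≠ (jj : ℕ) := fun h => hne (Fin.ext h)
    have ha := hslot1 x
    have hb := hslot2 x
    have hwx := hwp x
    rcases Nat.lt_or_ge (slotOf x : ℕ) (jj : ℕ) with hlt | hge
    · have hmono : Astart p v ((slotOf x : ℕ) + 1) ≤ Astart p v jj.val :=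
        Astart_mono p v (by omega)
      omega
    · have hmono : Astart p v (jj.val + 1) ≤ Astart p v (slotOf x : ℕ) :=
        Astart_mono p v (by omega)
      omega
  -- fibers
  set F : Fin v.length → Finset (LJob ℓ u) :=
    fun ii => Finset.univ.filter fun x => slotOf x = ii with hFdef
  have hmemF : ∀ (x : LJob ℓ u) (ii : Fin v.length), x ∈ F ii ↔ slotOf x = ii := by
    intro x ii; simp [hFdef]
  -- per-slot upper bound
  have hfib_le : ∀ ii : Fin v.length, ∑ x ∈ F ii, w x ≤ v.get ii := by
    intro ii
    have hpack := pack (fun x : LJob ℓ u => σ (.inr x)) w (F ii).card (F ii) rfl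
        (Astart p v ii.val + p) (Astart p v (ii.val + 1))
        (fun x _ => le_trans hp (hwp x))
        (fun x _ y _ hxy => by
          rcases hnov (.inr x) (.inr y) (by simpa using hxy) with h | h
          · right; exact h
          · left; exact h)
        (fun x hx => by rw [hmemF] at hx; rw [← hx]; exact hslot1 x)
        (fun x hx => by rw [hmemF] at hx; rw [← hx]; exact hslot2 x)
    have hstep : Astart p v (ii.val + 1) = Astart p v ii.val + p + v.get ii := by
      simpa using Astart_succ p v ii.val ii.isLt
    calc ∑ x ∈ F ii, w x ≤ Astart p v (ii.val + 1) - (Astart p v ii.val + p) := hpack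
      _ = v.get ii := by omega
  -- total sums
  have htotal : ∑ x : LJob ℓ u, w x = v.sum := by
    rw [← Finset.univ_sigma_univ, Finset.sum_sigma]
    have hwsum : ∀ i : Fin ℓ, ∑ j : Fin (u i).length, w ⟨i, j⟩ = (u i).sum := by
      intro i
      show ∑ j : Fin (u i).length, (u i).get j = (u i).sum
      simpa only [List.get_eq_getElem] using Fin.sum_univ_getElem (u i)
    rw [Finset.sum_congr rfl fun i _ => hwsum i]
    have h1 : ∀ i : Fin ℓ, (u i).sum = p * (u i).count p + q * (u i).count q :=
      fun i => sum_pq_count (by omega) (u i) (hu i)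
    rw [Finset.sum_congr rfl fun i _ => h1 i, Finset.sum_add_distrib,
      ← Finset.mul_sum, ← Finset.mul_sum, ← hcp, ← hcq]
    exact (sum_pq_count (by omega : p ≠ q) v hv).symm
  have hfib_total : ∑ ii : Fin v.length, ∑ x ∈ F ii, w x
      = ∑ ii : Fin v.length, v.get ii := by
    have hfw := Finset.sum_fiberwise_eq_sum_filter Finset.univ Finset.univ slotOf w
    simp only [Finset.mem_univ, Finset.filter_true] at hfw
    rw [hFdef]
    simp only [hfw]
    rw [htotal]
    simpa only [List.get_eq_getElem] using (Fin.sum_univ_getElem v).symm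
  have hfib_eq : ∀ ii : Fin v.length, ∑ x ∈ F ii, w x = v.get ii := by
    intro ii
    exact (Finset.sum_eq_sum_iff_of_le fun i (_ : i ∈ Finset.univ) => hfib_le i).mp
      hfib_total ii (Finset.mem_univ ii)
  -- basic consequences
  have hsingle_le : ∀ (ii : Fin v.length) (x : LJob ℓ u), x ∈ F ii → w x ≤ v.get ii := by
    intro ii x hx
    rw [← hfib_eq ii]
    exact Finset.single_le_sum (fun y _ => Nat.zero_le _) hx
  have hpair_le : ∀ (ii : Fin v.length) (x y : LJob ℓ u), x ∈ F ii → y ∈ F ii → x ≠ y →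
      w x + w y ≤ v.get ii := by
    intro ii x y hx hy hxy
    rw [← hfib_eq ii]
    have hsub : {x, y} ⊆ F ii := by
      intro z hz; rcases Finset.mem_insert.mp hz with rfl | hz
      · exact hx
      · rw [Finset.mem_singleton.mp hz]; exact hy
    calc w x + w y = ∑ z ∈ ({x, y} : Finset (LJob ℓ u)), w z := (Finset.sum_pair hxy).symm
      _ ≤ ∑ z ∈ F ii, w z := Finset.sum_le_sum_of_subset hsub
  -- counting q-jobs and q-slots
  set Qjobs : Finset (LJob ℓ u) := Finset.univ.filter fun x => w x = q with hQjobs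
  set Qslots : Finset (Fin v.length) := Finset.univ.filter fun ii => v.get ii = q
    with hQslots
  have hcardQjobs : Qjobs.card = ∑ i : Fin ℓ, (u i).count q := by
    rw [hQjobs, Finset.card_filter]
    rw [← Finset.univ_sigma_univ, Finset.sum_sigma]
    refine Finset.sum_congr rfl fun i _ => ?_
    have hpt : ∀ j : Fin (u i).length, (if w ⟨i, j⟩ = q then (1:ℕ) else 0) =
        (fun b => if b = q then (1 : ℕ) else 0) ((u i)[j.1]) := by
      intro j; simp [hwdef, List.get_eq_getElem]
    rw [Finset.sum_congr rfl fun j _ => hpt j, Fin.sum_univ_fun_getElem (u i)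
        (fun b => if b = q then (1 : ℕ) else 0), count_eq_sum_map]
  have hcardQslots : Qslots.card = v.count q := by
    rw [hQslots, Finset.card_filter]
    have hpt : ∀ ii : Fin v.length, (if v.get ii = q then (1:ℕ) else 0) =
        (fun b => if b = q then (1 : ℕ) else 0) (v[ii.1]) := by
      intro ii; simp [List.get_eq_getElem]
    rw [Finset.sum_congr rfl fun ii _ => hpt ii, Fin.sum_univ_fun_getElem v
        (fun b => if b = q then (1 : ℕ) else 0), count_eq_sum_map]
  have hcards : Qslots.card ≤ Qjobs.card := by rw [hcardQjobs, hcardQslots, hcq]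
  have hmaps : ∀ x ∈ Qjobs, slotOf x ∈ Qslots := by
    intro x hx
    rw [hQjobs, Finset.mem_filter] at hx
    have hxF : x ∈ F (slotOf x) := (hmemF x _).mpr rfl
    have hle := hsingle_le (slotOf x) x hxF
    rcases hv (v.get (slotOf x)) (List.get_mem _ _) with h | h
    · omega
    · rw [hQslots, Finset.mem_filter]; exact ⟨Finset.mem_univ _, h⟩
  have hinj : ∀ x ∈ Qjobs, ∀ y ∈ Qjobs, slotOf x = slotOf y → x = y := by
    intro x hx y hy hxy
    by_contra hne
    have hQ := hmaps x hx
    rw [hQjobs, Finset.mem_filter] at hx hy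
    rw [hQslots, Finset.mem_filter] at hQ
    have := hpair_le (slotOf x) x y ((hmemF x _).mpr rfl)
      ((hmemF y _).mpr hxy.symm) hne
    omega
  have hsurj : ∀ ii ∈ Qslots, ∃ x, ∃ _ : x ∈ Qjobs, ii = slotOf x :=
    Finset.surj_on_of_inj_on_of_card_le (fun x _ => slotOf x)
      (fun x hx => hmaps x hx) (fun x y hx hy h => hinj x hx y hy h) hcards
  -- each fiber is a singleton of the right length
  have hmain : ∀ ii : Fin v.length, ∃ x : LJob ℓ u, F ii = {x} ∧ w x = v.get ii := by
    intro ii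
    rcases hv (v.get ii) (List.get_mem _ _) with h | h
    · -- p-slot
      have hne : (F ii).Nonempty := by
        by_contra hne
        rw [Finset.not_nonempty_iff_eq_empty] at hne
        have h0 := hfib_eq ii
        rw [hne] at h0
        simp only [Finset.sum_empty] at h0
        omega
      obtain ⟨x, hx⟩ := hne
      refine ⟨x, ?_, ?_⟩
      · rw [Finset.eq_singleton_iff_unique_mem]
        refine ⟨hx, fun y hy => ?_⟩
        by_contra hne
        have := hpair_le ii y x hy hx hne
        have := hwp x
        have := hwp y
        omega
      · have := hsingle_le ii x hx
        have := hwp x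
        omega
    · -- q-slot
      obtain ⟨x, hxQ, hxslot⟩ := hsurj ii (by
        rw [hQslots, Finset.mem_filter]; exact ⟨Finset.mem_univ _, h⟩)
      rw [hQjobs, Finset.mem_filter] at hxQ
      have hxF : x ∈ F ii := (hmemF x ii).mpr hxslot.symm
      refine ⟨x, ?_, by omega⟩
      rw [Finset.eq_singleton_iff_unique_mem]
      refine ⟨hxF, fun y hy => ?_⟩
      by_contra hne
      have := hpair_le ii y x hy hxF hne
      have := hwp y
      omega
  -- conclude
  refine ⟨fun g => hguard g, fun ii => ?_⟩
  obtain ⟨x0, hF0, hwx0⟩ := hmain ii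
  have hx0F : x0 ∈ F ii := by rw [hF0]; exact Finset.mem_singleton_self x0
  have hx0slot : slotOf x0 = ii := (hmemF x0 ii).mp hx0F
  have e1 : Astart p v ii.val + p ≤ σ (.inr x0) := by
    have := hslot1 x0; rwa [hx0slot] at this
  have e2 : σ (.inr x0) + w x0 ≤ Astart p v (ii.val + 1) := by
    have := hslot2 x0; rwa [hx0slot] at this
  have hwx0p : 1 ≤ w x0 := le_trans hp (hwp x0)
  constructor
  · refine ⟨x0, ⟨?_, ?_⟩, ?_⟩
    · simpa only [Astart] using e1
    · have h2 : σ (.inr x0) < Astart p v (ii.val + 1) := by omega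
      simpa only [Astart] using h2
    · intro y hy
      have h1 : Astart p v ii.val + p ≤ σ (.inr y) := by
        simpa only [Astart] using hy.1
      have h2 : σ (.inr y) < Astart p v (ii.val + 1) := by
        simpa only [Astart] using hy.2
      have hyslot := hslot_uniq y ii h1 h2
      have hyF : y ∈ F ii := (hmemF y ii).mpr hyslot
      rw [hF0, Finset.mem_singleton] at hyF
      exact hyF
  · intro y hy1 hy2
    have h1 : Astart p v ii.val + p ≤ σ (.inr y) := by simpa only [Astart] using hy1
    have h2 : σ (.inr y) < Astart p v (ii.val + 1) := by simpa only [Astart] using hy2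
    have hyslot := hslot_uniq y ii h1 h2
    have hyF : y ∈ F ii := (hmemF y ii).mpr hyslot
    have hyx0 : y = x0 := by rw [hF0, Finset.mem_singleton] at hyF; exact hyF
    subst hyx0
    have e2' : σ (.inr y) + w y ≤ Astart p v (ii.val + 1) := by
      have := hslot2 y; rwa [hyslot] at this
    constructor
    · rw [hww y]
      simpa only [Astart] using e2'
    · rw [hww y]; exact hwx0


end RPA
end

section
/- Let J = Q_1 ∪ ⋯ ∪ Q_k be a disjoint union of k precedence chains of jobs with release times, processing times (≥ 1) and deadlines in ℕ, and let DP be defined by the stated recurrence. If DP(j_1,…,j_k) = t < ∞, then there exists a feasible schedule of the job set {x_m^i : i ∈ {1,…,k}, 1 ≤ m ≤ j_i} (with the induced chain precedences, release times, processing times and deadlines) whose makespan equals t. -/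
open scoped ENat

namespace ChainDP

/-- The dynamic programming table for `k` chains, where `r i m`, `pt i m`,
`d i m` are the release time, processing time and deadline of the `m`-th job
`x_m^i` of chain `i` (`m` is 1-based).  `DP r pt d j ∈ ℕ∞` is the optimum
makespan for scheduling the first `j i` jobs of each chain `i`, computed by
`DP(0,…,0) = 0` and otherwise the minimum over all `i` with `j i ≠ 0` of
`tᵢ + p(x_{jᵢ}^i)` if `tᵢ + p(x_{jᵢ}^i) ≤ d(x_{jᵢ}^i)` and `∞` otherwise,
where `tᵢ = max(DP(j₁,…,jᵢ−1,…,j_k), r(x_{jᵢ}^i))`. -/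
noncomputable def DP {k : ℕ} (r pt d : Fin k → ℕ → ℕ) (j : Fin k → ℕ) : ℕ∞ :=
  if ∀ i, j i = 0 then 0
  else
    (Finset.univ.filter fun i => j i ≠ 0).attach.inf fun ip =>
      let i := ip.1
      let t : ℕ∞ := max (DP r pt d (Function.update j i (j i - 1))) (r i (j i) : ℕ∞)
      if t + (pt i (j i) : ℕ∞) ≤ (d i (j i) : ℕ∞) then t + (pt i (j i) : ℕ∞)
      else ⊤
termination_by ∑ i, j i
decreasing_by
  have hji : j ip.1 ≠ 0 := by
    have h := ip.2
    simp only [Finset.mem_filter] at h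
    exact h.2
  apply Finset.sum_lt_sum
  · intro m _
    rcases eq_or_ne m ip.1 with h | h
    · subst h; simp only [Function.update_self]; omega
    · simp [Function.update_of_ne h]
  · exact ⟨ip.1, Finset.mem_univ _, by simp only [Function.update_self]; omega⟩

/-- The set of jobs `{x_m^i : 1 ≤ m ≤ j i}`; the pair `⟨i, m⟩` with
`m : Fin (j i)` represents the `(m+1)`-st job of chain `i`. -/
abbrev Job {k : ℕ} (j : Fin k → ℕ) : Type := Σ i : Fin k, Fin (j i)

/-- Feasibility of a schedule of the jobs `{x_m^i : 1 ≤ m ≤ j i}`: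
release times, deadlines, non-overlap and the chain precedences hold. -/
def Feasible {k : ℕ} (r pt d : Fin k → ℕ → ℕ) (j : Fin k → ℕ)
    (σ : Job j → ℕ) : Prop :=
  (∀ x : Job j, r x.1 (x.2.val + 1) ≤ σ x) ∧
  (∀ x : Job j, σ x + pt x.1 (x.2.val + 1) ≤ d x.1 (x.2.val + 1)) ∧
  (∀ x y : Job j, x ≠ y →
    σ y + pt y.1 (y.2.val + 1) ≤ σ x ∨ σ x + pt x.1 (x.2.val + 1) ≤ σ y) ∧
  (∀ x y : Job j, x.1 = y.1 → (x.2 : ℕ) < (y.2 : ℕ) → σ x ≤ σ y)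

/-- The makespan of a schedule (`0` for the empty schedule). -/
def makespan {k : ℕ} (pt : Fin k → ℕ → ℕ) (j : Fin k → ℕ)
    (σ : Job j → ℕ) : ℕ :=
  Finset.univ.sup fun x : Job j => σ x + pt x.1 (x.2.val + 1)

lemma zero_case {k : ℕ} (r pt d : Fin k → ℕ → ℕ) (j : Fin k → ℕ)
    (h0 : ∀ i, j i = 0) :
    ∃ σ : Job j → ℕ, Feasible r pt d j σ ∧ makespan pt j σ = 0 := by
  haveI : IsEmpty (Job j) := ⟨fun x => by have h1 := x.2.isLt; have h2 := h0 x.1; omega⟩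
  refine ⟨fun _ => 0, ⟨?_, ?_, ?_, ?_⟩, ?_⟩
  · intro x; exact isEmptyElim x
  · intro x; exact isEmptyElim x
  · intro x; exact isEmptyElim x
  · intro x; exact isEmptyElim x
  · simp [makespan, Finset.univ_eq_empty]

/-- If the DP value is finite and equal to `t`, then there is a feasible
schedule of the jobs `{x_m^i : 1 ≤ m ≤ j i}` with makespan `t`. -/
theorem schedule_of_DP {k : ℕ} (L : Fin k → ℕ) (r pt d : Fin k → ℕ → ℕ)
    (hpt : ∀ i m, 1 ≤ m → m ≤ L i → 1 ≤ pt i m)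
    (j : Fin k → ℕ) (hj : ∀ i, j i ≤ L i) (t : ℕ)
    (hDP : DP r pt d j = (t : ℕ∞)) :
    ∃ σ : Job j → ℕ, Feasible r pt d j σ ∧ makespan pt j σ = t := by
  classical
  have main : ∀ n (j : Fin k → ℕ), ∑ i, j i ≤ n → (∀ i, j i ≤ L i) → ∀ t : ℕ,
      DP r pt d j = (t : ℕ∞) →
      ∃ σ : Job j → ℕ, Feasible r pt d j σ ∧ makespan pt j σ = t := by
    intro n
    induction n with
    | zero =>
      intro j hsum hj t hDP
      have h0 : ∀ i, j i = 0 := by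
        intro i
        exact Finset.sum_eq_zero_iff.mp (Nat.le_zero.mp hsum) i (Finset.mem_univ i)
      rw [DP, if_pos h0] at hDP
      have ht : t = 0 := by exact_mod_cast hDP.symm
      subst ht
      exact zero_case r pt d j h0
    | succ n IH =>
      intro j hsum hj t hDP
      by_cases h0 : ∀ i, j i = 0
      · rw [DP, if_pos h0] at hDP
        have ht : t = 0 := by exact_mod_cast hDP.symm
        subst ht
        exact zero_case r pt d j h0
      · rw [DP, if_neg h0] at hDP
        have hne : ((Finset.univ.filter fun i => j i ≠ 0).attach).Nonempty := by
          obtain ⟨i0, hi0⟩ := not_forall.mp h0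
          exact ⟨⟨i0, by simp [hi0]⟩, Finset.mem_attach _ _⟩
        obtain ⟨ip, -, hip⟩ := Finset.exists_mem_eq_inf
          ((Finset.univ.filter fun i => j i ≠ 0).attach) hne
          (fun ip => if max (DP r pt d (Function.update j ip.1 (j ip.1 - 1))) ((r ip.1 (j ip.1) : ℕ∞)) + (pt ip.1 (j ip.1) : ℕ∞) ≤ (d ip.1 (j ip.1) : ℕ∞) then max (DP r pt d (Function.update j ip.1 (j ip.1 - 1))) ((r ip.1 (j ip.1) : ℕ∞)) + (pt ip.1 (j ip.1) : ℕ∞) else ⊤)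
        replace hDP : (if max (DP r pt d (Function.update j ip.1 (j ip.1 - 1))) ((r ip.1 (j ip.1) : ℕ∞)) + (pt ip.1 (j ip.1) : ℕ∞) ≤ (d ip.1 (j ip.1) : ℕ∞) then max (DP r pt d (Function.update j ip.1 (j ip.1 - 1))) ((r ip.1 (j ip.1) : ℕ∞)) + (pt ip.1 (j ip.1) : ℕ∞) else ⊤) = (t : ℕ∞) := by
          rw [← hip]; exact hDP
        set i := ip.1 with hidef
        have hji : j i ≠ 0 := (Finset.mem_filter.mp ip.2).2
        split_ifs at hDP with hcond
        swap
        · exact absurd hDP (by simp)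
        set j' := Function.update j i (j i - 1) with hj'def
        have hDPfin : DP r pt d j' ≠ ⊤ := by
          intro h
          rw [h] at hDP
          simp at hDP
        obtain ⟨t', ht0⟩ := WithTop.ne_top_iff_exists.mp hDPfin
        have ht' : ((t' : ℕ) : ℕ∞) = DP r pt d j' := by exact_mod_cast ht0
        rw [← ht'] at hDP hcond
        have heq : max t' (r i (j i)) + pt i (j i) = t := by
          rw [← Nat.mono_cast.map_max, ← Nat.cast_add] at hDP
          exact_mod_cast hDP
        have hd : max t' (r i (j i)) + pt i (j i) ≤ d i (j i) := by
          rw [← Nat.mono_cast.map_max, ← Nat.cast_add] at hcond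
          exact_mod_cast hcond
        have hsum' : ∑ x, j' x ≤ n := by
          have h1 : ∑ x, j' x = (j i - 1) + ∑ x ∈ Finset.univ.erase i, j x := by
            rw [hj'def, Finset.sum_update_of_mem (Finset.mem_univ i),
              Finset.sdiff_singleton_eq_erase]
          have h2 : j i + ∑ x ∈ Finset.univ.erase i, j x = ∑ x, j x :=
            Finset.add_sum_erase _ _ (Finset.mem_univ i)
          omega
        have hj'le : ∀ i', j' i' ≤ L i' := by
          intro i'
          rcases eq_or_ne i' i with hc | hc
          · subst hc; simp only [hj'def, Function.update_self]
            have := hj i; omega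
          · simp only [hj'def, Function.update_of_ne hc]; exact hj i'
        obtain ⟨σ', hfeas', hmk'⟩ := IH j' hsum' hj'le t' ht'.symm
        set s := max t' (r i (j i)) with hsdef
        have hub : ∀ y : Job j', σ' y + pt y.1 (y.2.val + 1) ≤ t' := by
          intro y
          rw [← hmk']
          exact Finset.le_sup (f := fun x : Job j' => σ' x + pt x.1 (x.2.val + 1))
            (Finset.mem_univ y)
        have key : ∀ (i' : Fin k) (m : ℕ), m < j i' → ¬(i' = i ∧ m = j i - 1) →
            m < j' i' := by
          intro i' m hm hne'
          rw [hj'def, Function.update_apply]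
          split_ifs with hc
          · subst hc
            have : m ≠ j i - 1 := fun he => hne' ⟨rfl, he⟩
            omega
          · exact hm
        have hinj : ∀ (x y : Job j) (hx : (x.2 : ℕ) < j' x.1) (hy : (y.2 : ℕ) < j' y.1),
            (⟨x.1, ⟨x.2, hx⟩⟩ : Job j') = ⟨y.1, ⟨y.2, hy⟩⟩ → x = y := by
          intro x y hx hy h
          rcases x with ⟨x1, x2⟩; rcases y with ⟨y1, y2⟩
          obtain ⟨h1, h2⟩ := Sigma.mk.inj_iff.mp h
          subst h1
          simp only [heq_eq_eq, Fin.mk.injEq] at h2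
          simp [Sigma.mk.inj_iff, Fin.ext_iff, h2]
        refine ⟨fun x => if h : x.1 = i ∧ (x.2 : ℕ) = j i - 1 then s
          else σ' ⟨x.1, ⟨x.2, key x.1 x.2 x.2.isLt h⟩⟩, ⟨?_, ?_, ?_, ?_⟩, ?_⟩
        · -- release times
          intro x
          dsimp only
          by_cases hx : x.1 = i ∧ (x.2 : ℕ) = j i - 1
          · rw [dif_pos hx]
            obtain ⟨x1, x2⟩ := x
            obtain ⟨hx1, hx2⟩ := hx
            subst hx1
            dsimp only at hx2 ⊢
            rw [show (x2 : ℕ) + 1 = j i from by omega]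
            exact le_max_right _ _
          · rw [dif_neg hx]
            exact hfeas'.1 ⟨x.1, ⟨x.2, key x.1 x.2 x.2.isLt hx⟩⟩
        · -- deadlines
          intro x
          dsimp only
          by_cases hx : x.1 = i ∧ (x.2 : ℕ) = j i - 1
          · rw [dif_pos hx]
            obtain ⟨x1, x2⟩ := x
            obtain ⟨hx1, hx2⟩ := hx
            subst hx1
            dsimp only at hx2 ⊢
            rw [show (x2 : ℕ) + 1 = j i from by omega]
            exact hd
          · rw [dif_neg hx]
            exact hfeas'.2.1 ⟨x.1, ⟨x.2, key x.1 x.2 x.2.isLt hx⟩⟩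
        · -- non-overlap
          intro x y hxy
          dsimp only
          by_cases hx : x.1 = i ∧ (x.2 : ℕ) = j i - 1 <;>
            by_cases hy : y.1 = i ∧ (y.2 : ℕ) = j i - 1
          · exfalso
            apply hxy
            rcases x with ⟨x1, x2⟩; rcases y with ⟨y1, y2⟩
            obtain ⟨hx1, hx2⟩ := hx; obtain ⟨hy1, hy2⟩ := hy
            subst hx1; subst hy1
            dsimp only at hx2 hy2
            have h2 : x2 = y2 := Fin.ext (by omega)
            rw [h2]
          · rw [dif_pos hx, dif_neg hy]
            left
            have hy2 : (y.2 : ℕ) + 1 = (⟨y.1, ⟨y.2, key y.1 y.2 y.2.isLt hy⟩⟩ : Job j').2.val + 1 := rfl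
            calc σ' ⟨y.1, ⟨y.2, key y.1 y.2 y.2.isLt hy⟩⟩ + pt y.1 ((y.2 : ℕ) + 1) ≤ t' :=
                  hub ⟨y.1, ⟨y.2, key y.1 y.2 y.2.isLt hy⟩⟩
              _ ≤ s := le_max_left _ _
          · rw [dif_neg hx, dif_pos hy]
            right
            calc σ' ⟨x.1, ⟨x.2, key x.1 x.2 x.2.isLt hx⟩⟩ + pt x.1 ((x.2 : ℕ) + 1) ≤ t' :=
                  hub ⟨x.1, ⟨x.2, key x.1 x.2 x.2.isLt hx⟩⟩
              _ ≤ s := le_max_left _ _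
          · rw [dif_neg hx, dif_neg hy]
            refine hfeas'.2.2.1 _ _ ?_
            intro h
            exact hxy (hinj x y _ _ h)
        · -- precedence
          intro x y hxy1 hlt2
          dsimp only
          by_cases hx : x.1 = i ∧ (x.2 : ℕ) = j i - 1 <;>
            by_cases hy : y.1 = i ∧ (y.2 : ℕ) = j i - 1
          · exact absurd hlt2 (by have := hx.2; have := hy.2; omega)
          · exfalso
            have hy1 : y.1 = i := hxy1 ▸ hx.1
            have hylt : (y.2 : ℕ) < j i := by rw [← hy1]; exact y.2.isLt
            have hyne : ¬((y.2 : ℕ) = j i - 1) := fun he => hy ⟨hy1, he⟩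
            have hx2 := hx.2
            omega
          · rw [dif_neg hx, dif_pos hy]
            calc σ' ⟨x.1, ⟨x.2, key x.1 x.2 x.2.isLt hx⟩⟩
                ≤ σ' ⟨x.1, ⟨x.2, key x.1 x.2 x.2.isLt hx⟩⟩ + pt x.1 ((x.2 : ℕ) + 1) :=
                  Nat.le_add_right _ _
              _ ≤ t' := hub _
              _ ≤ s := le_max_left _ _
          · rw [dif_neg hx, dif_neg hy]
            exact hfeas'.2.2.2 _ _ hxy1 hlt2
        · -- makespan
          have hnew : ((⟨i, ⟨j i - 1, by omega⟩⟩ : Job j).1 = i ∧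
              ((⟨i, ⟨j i - 1, by omega⟩⟩ : Job j).2 : ℕ) = j i - 1) := ⟨rfl, rfl⟩
          apply le_antisymm
          · apply Finset.sup_le
            intro x _
            dsimp only
            by_cases hx : x.1 = i ∧ (x.2 : ℕ) = j i - 1
            · rw [dif_pos hx]
              obtain ⟨x1, x2⟩ := x
              obtain ⟨hx1, hx2⟩ := hx
              subst hx1
              dsimp only at hx2 ⊢
              rw [show (x2 : ℕ) + 1 = j i from by omega]
              omega
            · rw [dif_neg hx]
              have h1 := hub ⟨x.1, ⟨x.2, key x.1 x.2 x.2.isLt hx⟩⟩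
              dsimp only at h1
              have h2 : t' ≤ s := le_max_left _ _
              omega
          · have hle := Finset.le_sup
              (f := fun x : Job j => (if h : x.1 = i ∧ (x.2 : ℕ) = j i - 1 then s
                else σ' ⟨x.1, ⟨x.2, key x.1 x.2 x.2.isLt h⟩⟩) + pt x.1 ((x.2 : ℕ) + 1))
              (Finset.mem_univ (⟨i, ⟨j i - 1, by omega⟩⟩ : Job j))
            dsimp only at hle
            rw [dif_pos hnew] at hle
            have hx2 : j i - 1 + 1 = j i := by omega
            rw [hx2] at hle
            rw [← heq]
            exact hle
  exact main (∑ i, j i) j le_rfl hj t hDP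

end ChainDP
end

section
/- Let J = Q_1 ∪ ⋯ ∪ Q_k be a disjoint union of k precedence chains of jobs with release times, processing times (≥ 1) and deadlines in ℕ, and let DP be defined by the stated recurrence. If there exists a feasible schedule of the job set {x_m^i : i ∈ {1,…,k}, 1 ≤ m ≤ j_i} (with the induced chain precedences, release times, processing times and deadlines) with makespan t, then DP(j_1,…,j_k) ≤ t. -/
open scoped ENat

namespace ChainDP

theorem key {k : ℕ} (L : Fin k → ℕ) (r pt d : Fin k → ℕ → ℕ)
    (hpt : ∀ i m, 1 ≤ m → m ≤ L i → 1 ≤ pt i m) :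
    ∀ n (j : Fin k → ℕ), ∑ i, j i = n → (∀ i, j i ≤ L i) → ∀ (t : ℕ) (σ : Job j → ℕ),
      Feasible r pt d j σ → makespan pt j σ = t → DP r pt d j ≤ (t : ℕ∞) := by
  intro n
  induction n using Nat.strong_induction_on with
  | _ n ih =>
  intro j hsum hj t σ hσ hmk
  by_cases h0 : ∀ i, j i = 0
  · rw [DP, if_pos h0]; exact zero_le
  rw [DP, if_neg h0]
  obtain ⟨i0, hi0⟩ := not_forall.mp h0
  -- job with maximal start time
  obtain ⟨x, -, hxmax⟩ := Finset.exists_max_image (Finset.univ : Finset (Job j)) σ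
    ⟨⟨i0, ⟨0, Nat.pos_of_ne_zero hi0⟩⟩, Finset.mem_univ _⟩
  have pt1 : ∀ y : Job j, 1 ≤ pt y.1 (y.2.val + 1) := fun y =>
    hpt _ _ (by omega) (le_trans y.2.isLt (hj y.1))
  have hcomp : ∀ y : Job j, y ≠ x → σ y + pt y.1 (y.2.val + 1) ≤ σ x := by
    intro y hy
    rcases hσ.2.2.1 x y (fun h => hy h.symm) with h | h
    · exact h
    · have := hxmax y (Finset.mem_univ _)
      have := pt1 x
      omega
  have hlast : x.2.val + 1 = j x.1 := by
    by_contra hne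
    have hlt : x.2.val + 1 < j x.1 := by have := x.2.isLt; omega
    set y : Job j := ⟨x.1, ⟨x.2.val + 1, hlt⟩⟩ with hy
    have hyx : y ≠ x := by
      intro h
      have : (y.2 : ℕ) = (x.2 : ℕ) := by rw [h]
      have h' : (y.2 : ℕ) = (x.2 : ℕ) + 1 := rfl; omega
    have h1 : σ x ≤ σ y := hσ.2.2.2 x y rfl (by show (x.2 : ℕ) < (x.2 : ℕ) + 1; omega)
    have h2 := hcomp y hyx
    have := pt1 y
    omega
  have hmax : t = σ x + pt x.1 (x.2.val + 1) := by
    rw [← hmk, makespan]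
    apply le_antisymm
    · apply Finset.sup_le
      intro y _
      rcases eq_or_ne y x with h | h
      · rw [h]
      · exact le_trans (hcomp y h) (Nat.le_add_right _ _)
    · exact Finset.le_sup (f := fun y : Job j => σ y + pt y.1 (y.2.val + 1)) (Finset.mem_univ x)
  set i := x.1 with hi
  set j' := Function.update j i (j i - 1) with hj'
  have hle : ∀ i', j' i' ≤ j i' := by
    intro i'
    rcases eq_or_ne i' i with h | h
    · subst h; simp [hj']
    · simp [hj', Function.update_of_ne h]
  have hji : j i ≠ 0 := by
    have h := x.2.isLt
    simp only [hi]
    omega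
  -- embedding
  have hlift : ∀ y : Job j', (y.2 : ℕ) < j y.1 := fun y => lt_of_lt_of_le y.2.isLt (hle y.1)
  set ι : Job j' → Job j := fun y => ⟨y.1, ⟨y.2, hlift y⟩⟩ with hι
  have ιinj : Function.Injective ι := by
    intro a b hab
    obtain ⟨a1, a2⟩ := a; obtain ⟨b1, b2⟩ := b
    simp only [hι, Sigma.mk.inj_iff] at hab
    obtain ⟨h1, h2⟩ := hab
    subst h1
    simp only [heq_eq_eq, Fin.mk.injEq] at h2
    simp [Fin.ext_iff, h2]
  have ιne : ∀ y : Job j', ι y ≠ x := by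
    intro y hy
    have h1 : y.1 = i := congrArg Sigma.fst hy
    have h2 : (y.2 : ℕ) = (x.2 : ℕ) := by
      have h := congrArg (fun z : Job j => (z.2 : ℕ)) hy
      simpa using h
    have h6 := hlast
    have h3 : (y.2 : ℕ) < j' y.1 := y.2.isLt
    have h4 : j' y.1 = j' i := by rw [h1]
    have h5 : j' i = j i - 1 := by simp [hj']
    have h7 : j i = j x.fst := rfl
    omega
  set σ' : Job j' → ℕ := fun y => σ (ι y) with hσ'
  have feas' : Feasible r pt d j' σ' := by
    refine ⟨fun y => hσ.1 (ι y), fun y => hσ.2.1 (ι y), ?_, ?_⟩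
    · intro a b hab
      exact hσ.2.2.1 (ι a) (ι b) (fun h => hab (ιinj h))
    · intro a b h1 h2
      exact hσ.2.2.2 (ι a) (ι b) h1 h2
  have hmk' : makespan pt j' σ' ≤ σ x := by
    apply Finset.sup_le
    intro y _
    exact hcomp (ι y) (ιne y)
  have hsum' : ∑ i', j' i' < n := by
    rw [← hsum]
    apply Finset.sum_lt_sum
    · intro m _
      exact hle m
    · exact ⟨i, Finset.mem_univ _, by simp only [hj', Function.update_self]; omega⟩
  have hj'L : ∀ i', j' i' ≤ L i' := fun i' => le_trans (hle i') (hj i')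
  have hDP' : DP r pt d j' ≤ (makespan pt j' σ' : ℕ∞) :=
    ih _ hsum' j' rfl hj'L _ σ' feas' rfl
  have hDPx : DP r pt d j' ≤ (σ x : ℕ∞) :=
    le_trans hDP' (by exact_mod_cast hmk')
  -- bound the inf by the branch at i
  have hmem : i ∈ Finset.univ.filter fun i' => j i' ≠ 0 := by
    simp [hji]
  refine le_trans (Finset.inf_le (Finset.mem_attach _ ⟨i, hmem⟩)) ?_
  simp only
  have hrle : (r i (j i) : ℕ∞) ≤ (σ x : ℕ∞) := by
    have := hσ.1 x
    rw [hlast] at this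
    exact_mod_cast this
  have htle : max (DP r pt d (Function.update j i (j i - 1))) (r i (j i) : ℕ∞) ≤ (σ x : ℕ∞) :=
    max_le hDPx hrle
  have hdle : (σ x : ℕ∞) + (pt i (j i) : ℕ∞) ≤ (d i (j i) : ℕ∞) := by
    have := hσ.2.1 x
    rw [hlast] at this
    exact_mod_cast this
  have hcond : max (DP r pt d (Function.update j i (j i - 1))) (r i (j i) : ℕ∞)
      + (pt i (j i) : ℕ∞) ≤ (d i (j i) : ℕ∞) :=
    le_trans (add_le_add_left htle _) hdle
  rw [if_pos hcond]
  calc max (DP r pt d (Function.update j i (j i - 1))) (r i (j i) : ℕ∞) + (pt i (j i) : ℕ∞)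
      ≤ (σ x : ℕ∞) + (pt i (j i) : ℕ∞) := add_le_add_left htle _
    _ = (t : ℕ∞) := by rw [hmax, hlast]; push_cast; ring


/-- If there is a feasible schedule of the jobs `{x_m^i : 1 ≤ m ≤ j i}`
with makespan `t`, then `DP(j₁,…,j_k) ≤ t`. -/
theorem DP_le_of_schedule {k : ℕ} (L : Fin k → ℕ) (r pt d : Fin k → ℕ → ℕ)
    (hpt : ∀ i m, 1 ≤ m → m ≤ L i → 1 ≤ pt i m)
    (j : Fin k → ℕ) (hj : ∀ i, j i ≤ L i) (t : ℕ)
    (σ : Job j → ℕ) (hσ : Feasible r pt d j σ) (hmk : makespan pt j σ = t) :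
    DP r pt d j ≤ (t : ℕ∞) :=
  key L r pt d hpt _ j rfl hj t σ hσ hmk

end ChainDP
end

section
/- Let J = Q_1 ∪ ⋯ ∪ Q_k be a disjoint union of k precedence chains of jobs with release times, processing times (≥ 1) and deadlines in ℕ, and let DP be defined by the stated recurrence. For every tuple (j_1,…,j_k) with j_i ∈ {0,…,|Q_i|}: DP(j_1,…,j_k) < ∞ if and only if the job set {x_m^i : i ∈ {1,…,k}, 1 ≤ m ≤ j_i} admits a feasible schedule; and in that case DP(j_1,…,j_k) equals the minimum makespan over all feasible schedules of this job set. -/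
open scoped ENat

namespace ChainDP

section Helpers
variable {k : ℕ} {j j' : Fin k → ℕ}

/-- Embed the job set of a pointwise-smaller tuple. -/
def emb (h : ∀ a, j' a ≤ j a) (x : Job j') : Job j :=
  ⟨x.1, ⟨x.2.val, lt_of_lt_of_le x.2.isLt (h x.1)⟩⟩

lemma emb_injective (h : ∀ a, j' a ≤ j a) : Function.Injective (emb h) := by
  rintro ⟨a, m⟩ ⟨b, n⟩ he
  have h1 : a = b := congrArg Sigma.fst he
  subst h1
  have h2 : (m : ℕ) = (n : ℕ) := by
    have := congrArg (fun x : Job j => (x.2 : ℕ)) he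
    simpa [emb] using this
  exact congrArg (Sigma.mk a) (Fin.ext h2)

lemma feasible_restrict (r pt d : Fin k → ℕ → ℕ) (h : ∀ a, j' a ≤ j a) {σ : Job j → ℕ}
    (hσ : Feasible r pt d j σ) : Feasible r pt d j' (fun x => σ (emb h x)) := by
  obtain ⟨h1, h2, h3, h4⟩ := hσ
  refine ⟨fun x => h1 (emb h x), fun x => h2 (emb h x), ?_, ?_⟩
  · intro x y hxy
    exact h3 _ _ (fun he => hxy (emb_injective h he))
  · intro x y hxy hlt
    exact h4 (emb h x) (emb h y) hxy hlt

lemma makespan_restrict_le (pt : Fin k → ℕ → ℕ) (h : ∀ a, j' a ≤ j a) (σ : Job j → ℕ) :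
    makespan pt j' (fun x => σ (emb h x)) ≤ makespan pt j σ := by
  apply Finset.sup_le
  intro x _
  exact Finset.le_sup (f := fun x : Job j => σ x + pt x.1 (x.2.val + 1)) (Finset.mem_univ (emb h x))

lemma update_le (j : Fin k → ℕ) (i : Fin k) :
    ∀ a, Function.update j i (j i - 1) a ≤ j a := by
  intro a
  rcases eq_or_ne a i with rfl | h
  · rw [Function.update_self]; omega
  · rw [Function.update_of_ne h]

/-- View a job of `j` that is not the last job of chain `i` as a job of
`update j i (j i - 1)`. -/
def toOld (j : Fin k → ℕ) (i : Fin k) (x : Job j)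
    (h : ¬ (x.1 = i ∧ x.2.val + 1 = j i)) : Job (Function.update j i (j i - 1)) :=
  ⟨x.1, ⟨x.2.val, by
    rcases eq_or_ne x.1 i with hx | hx
    · have h1 : (x.2 : ℕ) < j x.1 := x.2.isLt
      have h2 : ¬ ((x.2 : ℕ) + 1 = j i) := fun hh => h ⟨hx, hh⟩
      have h3 : j x.1 = j i := by rw [hx]
      have hup : Function.update j i (j i - 1) x.1 = j i - 1 := by
        rw [hx, Function.update_self]
      omega
    · have h1 : (x.2 : ℕ) < j x.1 := x.2.isLt
      have hup : Function.update j i (j i - 1) x.1 = j x.1 := Function.update_of_ne hx _ _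
      omega⟩⟩

lemma emb_toOld (j : Fin k → ℕ) (i : Fin k) (x : Job j)
    (h : ¬ (x.1 = i ∧ x.2.val + 1 = j i)) :
    emb (update_le j i) (toOld j i x h) = x :=
  Sigma.ext rfl (heq_of_eq (Fin.ext rfl))

/-- Extend a schedule of `update j i (j i - 1)` by starting the last job of chain `i`
at time `t`. -/
def extend (j : Fin k → ℕ) (i : Fin k) (σ' : Job (Function.update j i (j i - 1)) → ℕ)
    (t : ℕ) (x : Job j) : ℕ :=
  if h : x.1 = i ∧ x.2.val + 1 = j i then t
  else σ' (toOld j i x h)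

lemma extend_toOld (j : Fin k → ℕ) (i : Fin k) (σ' : Job (Function.update j i (j i - 1)) → ℕ)
    (t : ℕ) (x : Job j) (h : ¬ (x.1 = i ∧ x.2.val + 1 = j i)) :
    extend j i σ' t x = σ' (toOld j i x h) := by
  rw [extend, dif_neg h]

lemma extend_emb (j : Fin k → ℕ) (i : Fin k) (σ' : Job (Function.update j i (j i - 1)) → ℕ)
    (t : ℕ) (z : Job (Function.update j i (j i - 1))) :
    extend j i σ' t (emb (update_le j i) z) = σ' z := by
  have hc : ¬ ((emb (update_le j i) z).1 = i ∧ ((emb (update_le j i) z).2 : ℕ) + 1 = j i) := by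
    rintro ⟨ha, hb⟩
    have hlt : (z.2 : ℕ) < Function.update j i (j i - 1) z.1 := z.2.isLt
    have hup : Function.update j i (j i - 1) z.1 = j i - 1 := by
      rw [show z.1 = i from ha, Function.update_self]
    have hb' : (z.2 : ℕ) + 1 = j i := hb
    omega
  rw [extend_toOld j i σ' t _ hc]
  exact congrArg σ' (Sigma.ext rfl (heq_of_eq (Fin.ext rfl)))

lemma extend_new (j : Fin k → ℕ) (i : Fin k) (hi : j i ≠ 0)
    (σ' : Job (Function.update j i (j i - 1)) → ℕ) (t : ℕ) (m : Fin (j i)) (hm : (m : ℕ) = j i - 1) :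
    extend j i σ' t ⟨i, m⟩ = t := by
  rw [extend, dif_pos ⟨rfl, by show (m : ℕ) + 1 = j i; omega⟩]

end Helpers

section DPLemmas
variable {k : ℕ}

lemma DP_eq_zero (r pt d : Fin k → ℕ → ℕ) {j : Fin k → ℕ} (h : ∀ i, j i = 0) :
    DP r pt d j = 0 := by rw [DP, if_pos h]

lemma DP_eq_inf (r pt d : Fin k → ℕ → ℕ) {j : Fin k → ℕ} (h : ¬ ∀ i, j i = 0) :
    DP r pt d j = (Finset.univ.filter fun i => j i ≠ 0).attach.inf (fun ip =>
      let i := ip.1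
      let t : ℕ∞ := max (DP r pt d (Function.update j i (j i - 1))) (r i (j i) : ℕ∞)
      if t + (pt i (j i) : ℕ∞) ≤ (d i (j i) : ℕ∞) then t + (pt i (j i) : ℕ∞)
      else ⊤) := by
  rw [DP, if_neg h]

lemma DP_le (r pt d : Fin k → ℕ → ℕ) {j : Fin k → ℕ} (i : Fin k) (hi : j i ≠ 0) :
    DP r pt d j ≤
      (if max (DP r pt d (Function.update j i (j i - 1))) (r i (j i) : ℕ∞)
          + (pt i (j i) : ℕ∞) ≤ (d i (j i) : ℕ∞) then
        max (DP r pt d (Function.update j i (j i - 1))) (r i (j i) : ℕ∞)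
          + (pt i (j i) : ℕ∞)
      else ⊤) := by
  rw [DP_eq_inf r pt d (fun h => hi (h i))]
  exact Finset.inf_le (Finset.mem_attach _ ⟨i, by simp [hi]⟩)

lemma sum_update_lt (j : Fin k → ℕ) (i : Fin k) (hi : j i ≠ 0) :
    ∑ a, Function.update j i (j i - 1) a < ∑ a, j a := by
  apply Finset.sum_lt_sum
  · intro m _
    rcases eq_or_ne m i with h | h
    · subst h; simp only [Function.update_self]; omega
    · simp [Function.update_of_ne h]
  · exact ⟨i, Finset.mem_univ _, by simp only [Function.update_self]; omega⟩

end DPLemmas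

lemma DP_le_makespan {k : ℕ} (L : Fin k → ℕ) (r pt d : Fin k → ℕ → ℕ)
    (hpt : ∀ i m, 1 ≤ m → m ≤ L i → 1 ≤ pt i m) :
    ∀ n (j : Fin k → ℕ), ∑ i, j i = n → (∀ i, j i ≤ L i) →
      ∀ σ : Job j → ℕ, Feasible r pt d j σ → DP r pt d j ≤ (makespan pt j σ : ℕ∞) := by
  intro n
  induction n using Nat.strong_induction_on with
  | _ n IH =>
  intro j hsum hjL σ hσ
  obtain ⟨h1, h2, h3, h4⟩ := hσ
  by_cases h0 : ∀ i, j i = 0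
  · rw [DP_eq_zero r pt d h0]; exact zero_le
  push_neg at h0
  obtain ⟨i0, hi0⟩ := h0
  haveI : Nonempty (Job j) := ⟨⟨i0, ⟨j i0 - 1, by omega⟩⟩⟩
  obtain ⟨⟨xi, xm⟩, -, hx⟩ :=
    Finset.exists_max_image (Finset.univ : Finset (Job j)) σ Finset.univ_nonempty
  have hji : j xi ≠ 0 := by have := xm.isLt; omega
  have hylt : j xi - 1 < j xi := by omega
  have hidx : j xi - 1 + 1 = j xi := by omega
  -- y is the last job of chain xi
  have hymax : ∀ z : Job j, σ z ≤ σ ⟨xi, ⟨j xi - 1, hylt⟩⟩ := by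
    intro z
    have hzx : σ z ≤ σ ⟨xi, xm⟩ := hx z (Finset.mem_univ z)
    have hxy : σ ⟨xi, xm⟩ ≤ σ ⟨xi, ⟨j xi - 1, hylt⟩⟩ := by
      rcases eq_or_lt_of_le (show (xm : ℕ) ≤ j xi - 1 by have := xm.isLt; omega) with he | hl
      · have : xm = ⟨j xi - 1, hylt⟩ := Fin.ext he
        rw [this]
      · exact h4 ⟨xi, xm⟩ ⟨xi, ⟨j xi - 1, hylt⟩⟩ rfl hl
    exact le_trans hzx hxy
  have hpy : 1 ≤ pt xi (j xi) := hpt xi (j xi) (by omega) (hjL xi)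
  have hkey : ∀ z : Job j, z ≠ ⟨xi, ⟨j xi - 1, hylt⟩⟩ →
      σ z + pt z.1 ((z.2 : ℕ) + 1) ≤ σ ⟨xi, ⟨j xi - 1, hylt⟩⟩ := by
    intro z hz
    rcases h3 (⟨xi, ⟨j xi - 1, hylt⟩⟩ : Job j) z (fun he => hz he.symm) with hc | hc
    · exact hc
    · exfalso
      have hmz := hymax z
      have hc' : σ (⟨xi, ⟨j xi - 1, hylt⟩⟩ : Job j) + pt xi (j xi) ≤ σ z := by
        simpa [hidx] using hc
      omega
  -- restrict to the remaining jobs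
  have hle := update_le j xi
  have hfeas' := feasible_restrict r pt d hle ⟨h1, h2, h3, h4⟩
  have hms' : makespan pt (Function.update j xi (j xi - 1)) (fun z => σ (emb hle z))
      ≤ σ ⟨xi, ⟨j xi - 1, hylt⟩⟩ := by
    apply Finset.sup_le
    intro z _
    have hzne : emb hle z ≠ ⟨xi, ⟨j xi - 1, hylt⟩⟩ := by
      intro he
      have hz1 : z.1 = xi := congrArg Sigma.fst he
      have hz2 : (z.2 : ℕ) = j xi - 1 := congrArg (fun w : Job j => (w.2 : ℕ)) he
      have hzl : (z.2 : ℕ) < Function.update j xi (j xi - 1) z.1 := z.2.isLt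
      have hup : Function.update j xi (j xi - 1) z.1 = j xi - 1 := by
        rw [hz1, Function.update_self]
      omega
    exact hkey (emb hle z) hzne
  have hDP' : DP r pt d (Function.update j xi (j xi - 1))
      ≤ ((σ ⟨xi, ⟨j xi - 1, hylt⟩⟩ : ℕ) : ℕ∞) := by
    refine le_trans (IH _ (hsum ▸ sum_update_lt j xi hji) _ rfl
      (fun a => le_trans (hle a) (hjL a)) _ hfeas') ?_
    exact_mod_cast hms'
  have hrle : r xi (j xi) ≤ σ ⟨xi, ⟨j xi - 1, hylt⟩⟩ := by
    have := h1 ⟨xi, ⟨j xi - 1, hylt⟩⟩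
    simpa [hidx] using this
  have htle : max (DP r pt d (Function.update j xi (j xi - 1))) (r xi (j xi) : ℕ∞)
      ≤ ((σ ⟨xi, ⟨j xi - 1, hylt⟩⟩ : ℕ) : ℕ∞) :=
    max_le hDP' (by exact_mod_cast hrle)
  have hdy : σ (⟨xi, ⟨j xi - 1, hylt⟩⟩ : Job j) + pt xi (j xi) ≤ d xi (j xi) := by
    have := h2 ⟨xi, ⟨j xi - 1, hylt⟩⟩
    simpa [hidx] using this
  have hcond : max (DP r pt d (Function.update j xi (j xi - 1))) (r xi (j xi) : ℕ∞)
      + (pt xi (j xi) : ℕ∞) ≤ (d xi (j xi) : ℕ∞) := by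
    refine le_trans (add_le_add_left htle _) ?_
    rw [← Nat.cast_add]
    exact_mod_cast hdy
  refine le_trans (DP_le r pt d xi hji) ?_
  rw [if_pos hcond]
  have hmk : σ (⟨xi, ⟨j xi - 1, hylt⟩⟩ : Job j) + pt xi (j xi) ≤ makespan pt j σ := by
    have := Finset.le_sup (f := fun x : Job j => σ x + pt x.1 ((x.2 : ℕ) + 1))
      (Finset.mem_univ (⟨xi, ⟨j xi - 1, hylt⟩⟩ : Job j))
    simpa [hidx, makespan] using this
  calc max (DP r pt d (Function.update j xi (j xi - 1))) (r xi (j xi) : ℕ∞)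
        + (pt xi (j xi) : ℕ∞)
      ≤ ((σ ⟨xi, ⟨j xi - 1, hylt⟩⟩ : ℕ) : ℕ∞) + (pt xi (j xi) : ℕ∞) :=
        add_le_add_left htle _
    _ ≤ (makespan pt j σ : ℕ∞) := by rw [← Nat.cast_add]; exact_mod_cast hmk

lemma exists_schedule {k : ℕ} (L : Fin k → ℕ) (r pt d : Fin k → ℕ → ℕ) :
    ∀ n (j : Fin k → ℕ), ∑ i, j i = n → (∀ i, j i ≤ L i) → DP r pt d j ≠ ⊤ →
      ∃ σ : Job j → ℕ, Feasible r pt d j σ ∧ (makespan pt j σ : ℕ∞) = DP r pt d j := by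
  intro n
  induction n using Nat.strong_induction_on with
  | _ n IH =>
  intro j hsum hjL hfin
  by_cases h0 : ∀ i, j i = 0
  · have hempty : ∀ x : Job j, False := fun x => by
      have h' := h0 x.1; have := x.2.isLt; omega
    refine ⟨fun _ => 0, ⟨fun x => (hempty x).elim, fun x => (hempty x).elim,
      fun x y _ => (hempty x).elim, fun x y _ _ => (hempty x).elim⟩, ?_⟩
    rw [DP_eq_zero r pt d h0]
    have hm : makespan pt j (fun _ => 0) = 0 := by
      refine Nat.le_antisymm ?_ (Nat.zero_le _)
      exact Finset.sup_le fun x _ => (hempty x).elim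
    rw [hm]; rfl
  · have hnef : (Finset.univ.filter fun i => j i ≠ 0).Nonempty := by
      push_neg at h0; obtain ⟨i0, hi0⟩ := h0; exact ⟨i0, by simp [hi0]⟩
    obtain ⟨⟨i, himem⟩, -, hinf⟩ := Finset.exists_mem_eq_inf
      ((Finset.univ.filter fun i => j i ≠ 0).attach)
      (Finset.attach_nonempty_iff.mpr hnef)
      (fun ip : {x // x ∈ Finset.univ.filter fun i => j i ≠ 0} =>
        let i := ip.1
        let t : ℕ∞ := max (DP r pt d (Function.update j i (j i - 1))) (r i (j i) : ℕ∞)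
        if t + (pt i (j i) : ℕ∞) ≤ (d i (j i) : ℕ∞) then t + (pt i (j i) : ℕ∞)
        else ⊤)
    have hji : j i ≠ 0 := (Finset.mem_filter.mp himem).2
    have hDPeq : DP r pt d j =
        (if max (DP r pt d (Function.update j i (j i - 1))) (r i (j i) : ℕ∞)
            + (pt i (j i) : ℕ∞) ≤ (d i (j i) : ℕ∞) then
          max (DP r pt d (Function.update j i (j i - 1))) (r i (j i) : ℕ∞)
            + (pt i (j i) : ℕ∞)
        else ⊤) := by
      rw [DP_eq_inf r pt d h0]; exact hinf
    by_cases hcond : max (DP r pt d (Function.update j i (j i - 1))) (r i (j i) : ℕ∞)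
        + (pt i (j i) : ℕ∞) ≤ (d i (j i) : ℕ∞)
    swap
    · rw [if_neg hcond] at hDPeq; exact absurd hDPeq hfin
    rw [if_pos hcond] at hDPeq
    have hfin' : DP r pt d (Function.update j i (j i - 1)) ≠ ⊤ := by
      intro h
      rw [h] at hDPeq
      simp at hDPeq
      exact hfin hDPeq
    obtain ⟨nv, hnv⟩ : ∃ nv : ℕ, DP r pt d (Function.update j i (j i - 1)) = (nv : ℕ∞) := by
      cases hD : DP r pt d (Function.update j i (j i - 1)) with
      | top => exact absurd hD hfin'
      | coe m => exact ⟨m, rfl⟩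
    obtain ⟨σ', hfeas', hms'⟩ := IH _ (hsum ▸ sum_update_lt j i hji) _ rfl
      (fun a => le_trans (update_le j i a) (hjL a)) hfin'
    have hmsn : makespan pt (Function.update j i (j i - 1)) σ' = nv := by
      rw [hnv] at hms'; exact_mod_cast hms'
    -- the start time of the new job
    set t : ℕ := max nv (r i (j i)) with ht
    have hmaxcast : max (DP r pt d (Function.update j i (j i - 1))) (r i (j i) : ℕ∞)
        = ((t : ℕ) : ℕ∞) := by
      rw [hnv, ht]; exact_mod_cast rfl
    have hcondn : t + pt i (j i) ≤ d i (j i) := by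
      rw [hmaxcast, ← Nat.cast_add] at hcond
      exact_mod_cast hcond
    have hidx : j i - 1 + 1 = j i := by omega
    set σ : Job j → ℕ := extend j i σ' t with hσ
    have hold : ∀ (x : Job j) (h : ¬ (x.1 = i ∧ (x.2 : ℕ) + 1 = j i)),
        σ x = σ' (toOld j i x h) := fun x h => extend_toOld j i σ' t x h
    have holdle : ∀ (x : Job j) (h : ¬ (x.1 = i ∧ (x.2 : ℕ) + 1 = j i)),
        σ x + pt x.1 ((x.2 : ℕ) + 1) ≤ nv := by
      intro x h
      rw [hold x h]
      have := Finset.le_sup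
        (f := fun z : Job (Function.update j i (j i - 1)) => σ' z + pt z.1 ((z.2 : ℕ) + 1))
        (Finset.mem_univ (toOld j i x h))
      rw [← hmsn]
      exact this
    have hfeas : Feasible r pt d j σ := by
      obtain ⟨g1, g2, g3, g4⟩ := hfeas'
      refine ⟨?_, ?_, ?_, ?_⟩
      · intro x
        by_cases h : x.1 = i ∧ (x.2 : ℕ) + 1 = j i
        · have e1 : r x.1 ((x.2 : ℕ) + 1) = r i (j i) := by rw [h.2, h.1]
          rw [hσ, extend, dif_pos h, e1]
          exact le_max_right _ _
        · rw [hold x h]; exact g1 (toOld j i x h)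
      · intro x
        by_cases h : x.1 = i ∧ (x.2 : ℕ) + 1 = j i
        · have e2 : pt x.1 ((x.2 : ℕ) + 1) = pt i (j i) := by rw [h.2, h.1]
          have e3 : d x.1 ((x.2 : ℕ) + 1) = d i (j i) := by rw [h.2, h.1]
          rw [hσ, extend, dif_pos h, e2, e3]
          exact hcondn
        · rw [hold x h]; exact g2 (toOld j i x h)
      · intro x y hxy
        by_cases hX : x.1 = i ∧ (x.2 : ℕ) + 1 = j i
        · by_cases hY : y.1 = i ∧ (y.2 : ℕ) + 1 = j i
          · exfalso
            obtain ⟨x1, x2⟩ := x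
            obtain ⟨y1, y2⟩ := y
            obtain ⟨hx1, hx2⟩ := hX
            obtain ⟨hy1, hy2⟩ := hY
            dsimp at hx1 hx2 hy1 hy2
            subst hx1; subst hy1
            exact hxy (congrArg (Sigma.mk _) (Fin.ext (by omega)))
          · left
            have hyv := holdle y hY
            have hxt : σ x = t := by rw [hσ, extend, dif_pos hX]
            rw [hxt]
            have : nv ≤ t := le_max_left _ _
            omega
        · by_cases hY : y.1 = i ∧ (y.2 : ℕ) + 1 = j i
          · right
            have hxv := holdle x hX
            have hyt : σ y = t := by rw [hσ, extend, dif_pos hY]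
            rw [hyt]
            have : nv ≤ t := le_max_left _ _
            omega
          · have hne : toOld j i x hX ≠ toOld j i y hY := by
              intro he
              apply hxy
              rw [← emb_toOld j i x hX, ← emb_toOld j i y hY, he]
            rcases g3 (toOld j i x hX) (toOld j i y hY) hne with hc | hc
            · left; rw [hold x hX, hold y hY]; exact hc
            · right; rw [hold x hX, hold y hY]; exact hc
      · intro x y hxy1 hlt
        by_cases hX : x.1 = i ∧ (x.2 : ℕ) + 1 = j i
        · exfalso
          have hy2 : (y.2 : ℕ) < j y.1 := y.2.isLt
          have : j y.1 = j i := by rw [← hxy1, hX.1]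
          have := hX.2
          omega
        · by_cases hY : y.1 = i ∧ (y.2 : ℕ) + 1 = j i
          · have hxv := holdle x hX
            have hyt : σ y = t := by rw [hσ, extend, dif_pos hY]
            have : nv ≤ t := le_max_left _ _
            omega
          · rw [hold x hX, hold y hY]
            exact g4 (toOld j i x hX) (toOld j i y hY) hxy1 hlt
    have hmk : makespan pt j σ = t + pt i (j i) := by
      apply Nat.le_antisymm
      · apply Finset.sup_le
        intro x _
        by_cases h : x.1 = i ∧ (x.2 : ℕ) + 1 = j i
        · have e2 : pt x.1 ((x.2 : ℕ) + 1) = pt i (j i) := by rw [h.2, h.1]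
          have hxt : σ x = t := by rw [hσ, extend, dif_pos h]
          rw [hxt, e2]
        · have := holdle x h
          have : nv ≤ t := le_max_left _ _
          omega
      · have ypf : j i - 1 < j i := by omega
        have hyn : σ (⟨i, ⟨j i - 1, ypf⟩⟩ : Job j) = t := by
          rw [hσ]; exact extend_new j i hji σ' t _ rfl
        refine le_trans ?_ (Finset.le_sup (f := fun x : Job j => σ x + pt x.1 ((x.2 : ℕ) + 1))
          (Finset.mem_univ (⟨i, ⟨j i - 1, ypf⟩⟩ : Job j)))
        show t + pt i (j i) ≤ σ ⟨i, ⟨j i - 1, ypf⟩⟩ + pt i (j i - 1 + 1)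
        rw [hyn, hidx]
    refine ⟨σ, hfeas, ?_⟩
    rw [hmk, hDPeq, hmaxcast, ← Nat.cast_add]


/-- Correctness of the DP: `DP(j₁,…,j_k)` is finite iff the job set
`{x_m^i : 1 ≤ m ≤ j i}` admits a feasible schedule, and in that case it
equals the minimum makespan over all feasible schedules of this job set. -/
theorem DP_correct {k : ℕ} (L : Fin k → ℕ) (r pt d : Fin k → ℕ → ℕ)
    (hpt : ∀ i m, 1 ≤ m → m ≤ L i → 1 ≤ pt i m)
    (j : Fin k → ℕ) (hj : ∀ i, j i ≤ L i) :
    (DP r pt d j ≠ ⊤ ↔ ∃ σ : Job j → ℕ, Feasible r pt d j σ) ∧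
    (DP r pt d j ≠ ⊤ →
      ∃ σ : Job j → ℕ, Feasible r pt d j σ ∧
        (makespan pt j σ : ℕ∞) = DP r pt d j ∧
        ∀ σ' : Job j → ℕ, Feasible r pt d j σ' →
          makespan pt j σ ≤ makespan pt j σ') := by
  constructor
  · constructor
    · intro hfin
      obtain ⟨σ, hf, -⟩ := exists_schedule L r pt d _ j rfl hj hfin
      exact ⟨σ, hf⟩
    · rintro ⟨σ, hf⟩
      have hle := DP_le_makespan L r pt d hpt _ j rfl hj σ hf
      exact ne_top_of_le_ne_top (by simp) hle
  · intro hfin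
    obtain ⟨σ, hf, hms⟩ := exists_schedule L r pt d _ j rfl hj hfin
    refine ⟨σ, hf, hms, ?_⟩
    intro σ' hf'
    have h2 := DP_le_makespan L r pt d hpt _ j rfl hj σ' hf'
    rw [← hms] at h2
    exact_mod_cast h2

end ChainDP
end

section
/- Let ≺ be a strict partial order on a finite job set J with release times, processing times (≥ 1) and deadlines in ℕ, let J = Q_1 ∪ ⋯ ∪ Q_k be a partition of J into chains of ≺, and let DP′ be defined by the stated restricted recurrence. Then DP′(|Q_1|,…,|Q_k|) < ∞ if and only if J admits a feasible schedule respecting ≺, and in that case DP′(|Q_1|,…,|Q_k|) equals the minimum makespan over all feasible schedules of J. -/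
open scoped ENat Classical

namespace WidthDP

/-- The restricted dynamic programming table for a strict partial order
`prec` on the job set `J` decomposed into `k` chains, where `x i m` is the
`m`-th job of chain `i` (1-based) and `r`, `pt`, `d` give release times,
processing times and deadlines.  `DP'(j₁,…,j_k) ∈ ℕ∞` is defined by
`DP'(0,…,0) = 0` and otherwise as the minimum, over all `i` with `j i ≠ 0`
such that there is no `i' ≠ i` and `m ≤ j i'` with `x_{jᵢ}^i ≺ x_m^{i'}`, of
`tᵢ + pt(x_{jᵢ}^i)` if `tᵢ + pt(x_{jᵢ}^i) ≤ d(x_{jᵢ}^i)` and `∞` otherwise,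
where `tᵢ = max(DP'(j₁,…,jᵢ−1,…,j_k), r(x_{jᵢ}^i))`; the minimum over the
empty set is `∞`. -/
noncomputable def DP' {J : Type*} {k : ℕ} (prec : J → J → Prop)
    (r pt d : J → ℕ) (x : Fin k → ℕ → J) (j : Fin k → ℕ) : ℕ∞ :=
  if ∀ i, j i = 0 then 0
  else
    (Finset.univ.filter fun i => j i ≠ 0 ∧
        ¬∃ i' m, i' ≠ i ∧ 1 ≤ m ∧ m ≤ j i' ∧ prec (x i (j i)) (x i' m)).attach.inf
      fun ip =>
        let i := ip.1
        let t : ℕ∞ := max (DP' prec r pt d x (Function.update j i (j i - 1)))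
          (r (x i (j i)) : ℕ∞)
        if t + (pt (x i (j i)) : ℕ∞) ≤ (d (x i (j i)) : ℕ∞) then
          t + (pt (x i (j i)) : ℕ∞)
        else ⊤
termination_by ∑ i, j i
decreasing_by
  have hji : j ip.1 ≠ 0 := by
    have h := ip.2
    simp only [Finset.mem_filter] at h
    exact h.2.1
  apply Finset.sum_lt_sum
  · intro m _
    rcases eq_or_ne m ip.1 with h | h
    · subst h; simp only [Function.update_self]; omega
    · simp [Function.update_of_ne h]
  · exact ⟨ip.1, Finset.mem_univ _, by simp only [Function.update_self]; omega⟩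

/-- Feasibility of a schedule of the whole job set `J`: release times,
deadlines, non-overlap and the precedence relation are respected. -/
def Feasible {J : Type*} (prec : J → J → Prop) (r pt d : J → ℕ)
    (σ : J → ℕ) : Prop :=
  (∀ a, r a ≤ σ a) ∧
  (∀ a, σ a + pt a ≤ d a) ∧
  (∀ a b, a ≠ b → σ b + pt b ≤ σ a ∨ σ a + pt a ≤ σ b) ∧
  (∀ a b, prec a b → σ a ≤ σ b)

/-- The makespan of a schedule. -/
def makespan {J : Type*} [Fintype J] (pt : J → ℕ) (σ : J → ℕ) : ℕ :=
  Finset.univ.sup fun a => σ a + pt a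


section Aux

variable {J : Type*} {k : ℕ} (prec : J → J → Prop) (r pt d : J → ℕ)
  (x : Fin k → ℕ → J)

/-- Membership in the prefix job set determined by `j`. -/
def inS (j : Fin k → ℕ) (a : J) : Prop := ∃ i m, 1 ≤ m ∧ m ≤ j i ∧ x i m = a

/-- Feasibility on the prefix job set. -/
def PFeas (j : Fin k → ℕ) (σ : J → ℕ) : Prop :=
  (∀ a, inS x j a → r a ≤ σ a) ∧
  (∀ a, inS x j a → σ a + pt a ≤ d a) ∧
  (∀ a b, inS x j a → inS x j b → a ≠ b → σ b + pt b ≤ σ a ∨ σ a + pt a ≤ σ b) ∧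
  (∀ a b, inS x j a → inS x j b → prec a b → σ a ≤ σ b)

/-- Makespan on the prefix job set. -/
noncomputable def pmak [Fintype J] (j : Fin k → ℕ) (σ : J → ℕ) : ℕ :=
  (Finset.univ.filter (inS x j)).sup fun a => σ a + pt a

lemma cast_max (a b : ℕ) : ((max a b : ℕ) : ℕ∞) = max (a : ℕ∞) (b : ℕ∞) := by
  rcases le_total a b with h | h
  · rw [max_eq_right h, max_eq_right (by exact_mod_cast h)]
  · rw [max_eq_left h, max_eq_left (by exact_mod_cast h)]

lemma inS_update_iff (j : Fin k → ℕ) (i : Fin k) (hi : j i ≠ 0) (b : J) :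
    inS x j b ↔ inS x (Function.update j i (j i - 1)) b ∨ b = x i (j i) := by
  constructor
  · rintro ⟨i', m, h1, h2, rfl⟩
    rcases eq_or_ne i' i with rfl | hne
    · rcases eq_or_ne m (j i') with rfl | hm
      · right; rfl
      · left; exact ⟨i', m, h1, by simp [Function.update_self]; omega, rfl⟩
    · left; exact ⟨i', m, h1, by rwa [Function.update_of_ne hne], rfl⟩
  · rintro (⟨i', m, h1, h2, rfl⟩ | rfl)
    · refine ⟨i', m, h1, le_trans h2 ?_, rfl⟩
      rcases eq_or_ne i' i with rfl | hne
      · simp [Function.update_self]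
      · rw [Function.update_of_ne hne]
    · exact ⟨i, j i, by omega, le_rfl, rfl⟩

lemma inS_update_mono (j : Fin k → ℕ) (i : Fin k) (b : J) :
    inS x (Function.update j i (j i - 1)) b → inS x j b := by
  rintro ⟨i', m, h1, h2, rfl⟩
  refine ⟨i', m, h1, le_trans h2 ?_, rfl⟩
  rcases eq_or_ne i' i with rfl | hne
  · simp [Function.update_self]
  · rw [Function.update_of_ne hne]

lemma not_inS_update (L : Fin k → ℕ)
    (hinj : ∀ i m i' m', 1 ≤ m → m ≤ L i → 1 ≤ m' → m' ≤ L i' →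
      x i m = x i' m' → i = i' ∧ m = m')
    (j : Fin k → ℕ) (hle : ∀ i, j i ≤ L i) (i : Fin k) (hi : j i ≠ 0) :
    ¬ inS x (Function.update j i (j i - 1)) (x i (j i)) := by
  rintro ⟨i', m, h1, h2, heq⟩
  have hji : 1 ≤ j i := by omega
  have h2' : m ≤ L i' := by
    refine le_trans h2 (le_trans ?_ (hle i'))
    rcases eq_or_ne i' i with rfl | hne
    · simp [Function.update_self]
    · rw [Function.update_of_ne hne]
  obtain ⟨rfl, rfl⟩ := hinj i' m i (j i) h1 h2' hji (hle i) heq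
  simp [Function.update_self] at h2
  omega

lemma DP'_zero (j : Fin k → ℕ) (h : ∀ i, j i = 0) : DP' prec r pt d x j = 0 := by
  rw [DP'.eq_def, if_pos h]

/-- One-step upper bound on `DP'`. -/
lemma DP'_le_step (j : Fin k → ℕ) (i : Fin k) (hi : j i ≠ 0)
    (hfree : ¬∃ i' m, i' ≠ i ∧ 1 ≤ m ∧ m ≤ j i' ∧ prec (x i (j i)) (x i' m))
    (hd : max (DP' prec r pt d x (Function.update j i (j i - 1)))
        (r (x i (j i)) : ℕ∞) + (pt (x i (j i)) : ℕ∞) ≤ (d (x i (j i)) : ℕ∞)) :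
    DP' prec r pt d x j ≤ max (DP' prec r pt d x (Function.update j i (j i - 1)))
        (r (x i (j i)) : ℕ∞) + (pt (x i (j i)) : ℕ∞) := by
  have h0 : ¬ ∀ i', j i' = 0 := fun h => hi (h i)
  rw [DP'.eq_def, if_neg h0]
  have hmem : i ∈ Finset.univ.filter fun i => j i ≠ 0 ∧
      ¬∃ i' m, i' ≠ i ∧ 1 ≤ m ∧ m ≤ j i' ∧ prec (x i (j i)) (x i' m) :=
    Finset.mem_filter.2 ⟨Finset.mem_univ _, hi, hfree⟩
  refine le_trans (Finset.inf_le (Finset.mem_attach _ ⟨i, hmem⟩)) ?_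
  simp only [if_pos hd, le_refl]

/-- Case analysis on a nonzero `DP'` value. -/
lemma DP'_spec (j : Fin k → ℕ) (h0 : ¬ ∀ i, j i = 0) :
    DP' prec r pt d x j = ⊤ ∨
    ∃ i, j i ≠ 0 ∧
      (¬∃ i' m, i' ≠ i ∧ 1 ≤ m ∧ m ≤ j i' ∧ prec (x i (j i)) (x i' m)) ∧
      (max (DP' prec r pt d x (Function.update j i (j i - 1)))
        (r (x i (j i)) : ℕ∞) + (pt (x i (j i)) : ℕ∞) ≤ (d (x i (j i)) : ℕ∞)) ∧
      DP' prec r pt d x j = max (DP' prec r pt d x (Function.update j i (j i - 1)))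
        (r (x i (j i)) : ℕ∞) + (pt (x i (j i)) : ℕ∞) := by
  by_cases hF : (Finset.univ.filter fun i => j i ≠ 0 ∧
      ¬∃ i' m, i' ≠ i ∧ 1 ≤ m ∧ m ≤ j i' ∧ prec (x i (j i)) (x i' m)).Nonempty
  · obtain ⟨ip, _, heq⟩ := Finset.exists_mem_eq_inf _ hF.attach
      (fun ip : {i // i ∈ Finset.univ.filter fun i => j i ≠ 0 ∧
          ¬∃ i' m, i' ≠ i ∧ 1 ≤ m ∧ m ≤ j i' ∧ prec (x i (j i)) (x i' m)} =>
        let i := ip.1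
        let t : ℕ∞ := max (DP' prec r pt d x (Function.update j i (j i - 1)))
          (r (x i (j i)) : ℕ∞)
        if t + (pt (x i (j i)) : ℕ∞) ≤ (d (x i (j i)) : ℕ∞) then
          t + (pt (x i (j i)) : ℕ∞)
        else ⊤)
    have hDP : DP' prec r pt d x j =
        (if max (DP' prec r pt d x (Function.update j ip.1 (j ip.1 - 1)))
            (r (x ip.1 (j ip.1)) : ℕ∞) + (pt (x ip.1 (j ip.1)) : ℕ∞) ≤
            (d (x ip.1 (j ip.1)) : ℕ∞) then
          max (DP' prec r pt d x (Function.update j ip.1 (j ip.1 - 1)))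
            (r (x ip.1 (j ip.1)) : ℕ∞) + (pt (x ip.1 (j ip.1)) : ℕ∞)
        else ⊤) := by
      rw [DP'.eq_def, if_neg h0]; exact heq
    have hip := ip.2
    rw [Finset.mem_filter] at hip
    by_cases hc : max (DP' prec r pt d x (Function.update j ip.1 (j ip.1 - 1)))
        (r (x ip.1 (j ip.1)) : ℕ∞) + (pt (x ip.1 (j ip.1)) : ℕ∞) ≤
        (d (x ip.1 (j ip.1)) : ℕ∞)
    · right
      exact ⟨ip.1, hip.2.1, hip.2.2, hc, by rwa [if_pos hc] at hDP⟩
    · left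
      rwa [if_neg hc] at hDP
  · left
    rw [DP'.eq_def, if_neg h0, Finset.not_nonempty_iff_eq_empty.1 hF]
    simp

end Aux


/-- Soundness: a finite DP value yields a feasible prefix schedule whose
makespan equals the DP value. -/
lemma soundA {J : Type*} [Fintype J] {k : ℕ} (prec : J → J → Prop)
    (hirr : ∀ a, ¬prec a a)
    (htrans : ∀ a b c, prec a b → prec b c → prec a c)
    (r pt d : J → ℕ) (hpt : ∀ a, 1 ≤ pt a)
    (L : Fin k → ℕ) (x : Fin k → ℕ → J)
    (hchain : ∀ i m m', 1 ≤ m → m < m' → m' ≤ L i → prec (x i m) (x i m'))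
    (hinj : ∀ i m i' m', 1 ≤ m → m ≤ L i → 1 ≤ m' → m' ≤ L i' →
      x i m = x i' m' → i = i' ∧ m = m') :
    ∀ n (j : Fin k → ℕ), ∑ i, j i = n → (∀ i, j i ≤ L i) →
      DP' prec r pt d x j ≠ ⊤ →
      ∃ σ : J → ℕ, PFeas prec r pt d x j σ ∧
        (pmak pt x j σ : ℕ∞) = DP' prec r pt d x j := by
  intro n
  induction n using Nat.strong_induction_on with
  | _ n IH =>
  intro j hsum hle hne
  by_cases h0 : ∀ i, j i = 0
  · have hemp : ∀ a : J, ¬ inS x j a := by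
      rintro a ⟨i, m, h1, h2, rfl⟩; rw [h0 i] at h2; omega
    refine ⟨fun _ => 0, ⟨fun a ha => absurd ha (hemp a), fun a ha => absurd ha (hemp a),
      fun a b ha _ _ => absurd ha (hemp a), fun a b ha _ _ => absurd ha (hemp a)⟩, ?_⟩
    rw [DP'_zero prec r pt d x j h0]
    have hfe : Finset.univ.filter (inS x j) = ∅ := by
      apply Finset.filter_false_of_mem; intro a _; exact hemp a
    simp [pmak, hfe]
  · rcases DP'_spec prec r pt d x j h0 with htop | ⟨i, hi, hfree, hd, hval⟩
    · exact absurd htop hne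
    set a := x i (j i) with ha
    set j' := Function.update j i (j i - 1) with hj'
    have hsum' : ∑ m, j' m < n := by
      rw [← hsum]
      apply Finset.sum_lt_sum
      · intro m _
        rcases eq_or_ne m i with rfl | h
        · simp only [hj', Function.update_self]; omega
        · simp [hj', Function.update_of_ne h]
      · exact ⟨i, Finset.mem_univ _, by simp only [hj', Function.update_self]; omega⟩
    have hle' : ∀ m, j' m ≤ L m := by
      intro m; rcases eq_or_ne m i with rfl | h
      · simp only [hj', Function.update_self]
        exact le_trans (by omega) (hle m)
      · simpa [hj', Function.update_of_ne h] using hle m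
    have hne' : DP' prec r pt d x j' ≠ ⊤ := by
      intro h
      rw [h] at hval
      simp at hval
      exact hne hval
    obtain ⟨σ, hPF, hmak⟩ := IH _ hsum' j' rfl hle' hne'
    set P := pmak pt x j' σ with hP
    set T := max P (r a) with hTdef
    have hT : (T : ℕ∞) = max (DP' prec r pt d x j') ((r a : ℕ) : ℕ∞) := by
      rw [hTdef, cast_max, hmak]
    have hval' : DP' prec r pt d x j = ((T + pt a : ℕ) : ℕ∞) := by
      rw [hval, ← hT]; push_cast; ring
    have hdnat : T + pt a ≤ d a := by
      have h := hd
      rw [← hT] at h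
      exact_mod_cast h
    set σ'' := Function.update σ a T with hσ''
    have hnotin : ¬ inS x j' a := not_inS_update x L hinj j hle i hi
    have hagree : ∀ b, inS x j' b → σ'' b = σ b := by
      intro b hb
      exact Function.update_of_ne (fun h => hnotin (by rwa [h] at hb)) _ _
    have haval : σ'' a = T := Function.update_self a T σ
    have hsplit : ∀ b, inS x j b ↔ inS x j' b ∨ b = a := fun b =>
      inS_update_iff x j i hi b
    have hstart : ∀ b, inS x j' b → σ b + pt b ≤ T := by
      intro b hb
      refine le_trans ?_ (le_max_left P (r a))
      exact Finset.le_sup (f := fun b => σ b + pt b)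
        (Finset.mem_filter.2 ⟨Finset.mem_univ _, hb⟩)
    have hprecA : ∀ b, inS x j' b → ¬ prec a b := by
      rintro b hb hp
      obtain ⟨i', m, h1, h2, rfl⟩ := hb
      rcases eq_or_ne i' i with rfl | hii
      · have hm : m < j i' := by
          have h2' := h2
          simp only [hj', Function.update_self] at h2'
          omega
        exact hirr a (htrans _ _ _ hp (hchain i' m (j i') h1 hm (hle i')))
      · apply hfree
        refine ⟨i', m, hii, h1, ?_, hp⟩
        have h2' := h2
        rwa [hj', Function.update_of_ne hii] at h2'
    have hPFnew : PFeas prec r pt d x j σ'' := by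
      obtain ⟨p1, p2, p3, p4⟩ := hPF
      refine ⟨?_, ?_, ?_, ?_⟩
      · intro b hb
        rcases (hsplit b).1 hb with hb' | rfl
        · rw [hagree b hb']; exact p1 b hb'
        · rw [haval]; exact le_max_right P (r a)
      · intro b hb
        rcases (hsplit b).1 hb with hb' | rfl
        · rw [hagree b hb']; exact p2 b hb'
        · rw [haval]; exact hdnat
      · intro b c hb hc hbc
        rcases (hsplit b).1 hb with hb' | rfl <;> rcases (hsplit c).1 hc with hc' | hceq
        · rw [hagree b hb', hagree c hc']; exact p3 b c hb' hc' hbc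
        · subst hceq
          right; rw [hagree b hb', haval]; exact hstart b hb'
        · left; rw [hagree c hc', haval]; exact hstart c hc'
        · exact absurd hceq.symm hbc
      · intro b c hb hc hp
        rcases (hsplit b).1 hb with hb' | rfl <;> rcases (hsplit c).1 hc with hc' | hceq
        · rw [hagree b hb', hagree c hc']; exact p4 b c hb' hc' hp
        · subst hceq
          rw [hagree b hb', haval]
          exact le_trans (Nat.le_add_right _ _) (hstart b hb')
        · exact absurd hp (hprecA c hc')
        · subst hceq; exact absurd hp (hirr a)
    have hfil : Finset.univ.filter (inS x j) =
        insert a (Finset.univ.filter (inS x j')) := by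
      ext b
      simp only [Finset.mem_filter, Finset.mem_insert, Finset.mem_univ, true_and]
      rw [hsplit b]; tauto
    have hpm : pmak pt x j σ'' = T + pt a := by
      rw [pmak, hfil, Finset.sup_insert]
      have h2 : (Finset.univ.filter (inS x j')).sup (fun b => σ'' b + pt b) = P := by
        refine Finset.sup_congr rfl (fun b hb => ?_)
        rw [hagree b (Finset.mem_filter.1 hb).2]
      rw [haval, h2]
      exact max_eq_left (le_trans (le_max_left P (r a)) (Nat.le_add_right _ _))
    exact ⟨σ'', hPFnew, by rw [hpm, hval']⟩

/-- Lower bound: every feasible prefix schedule has makespan at least the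
DP value. -/
lemma lowerB {J : Type*} [Fintype J] {k : ℕ} (prec : J → J → Prop)
    (r pt d : J → ℕ) (hpt : ∀ a, 1 ≤ pt a)
    (L : Fin k → ℕ) (x : Fin k → ℕ → J)
    (hchain : ∀ i m m', 1 ≤ m → m < m' → m' ≤ L i → prec (x i m) (x i m'))
    (hinj : ∀ i m i' m', 1 ≤ m → m ≤ L i → 1 ≤ m' → m' ≤ L i' →
      x i m = x i' m' → i = i' ∧ m = m') :
    ∀ n (j : Fin k → ℕ), ∑ i, j i = n → (∀ i, j i ≤ L i) →
      ∀ σ : J → ℕ, PFeas prec r pt d x j σ →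
        DP' prec r pt d x j ≤ (pmak pt x j σ : ℕ∞) := by
  intro n
  induction n using Nat.strong_induction_on with
  | _ n IH =>
  intro j hsum hle σ hPF
  by_cases h0 : ∀ i, j i = 0
  · rw [DP'_zero prec r pt d x j h0]; exact zero_le
  · push_neg at h0
    obtain ⟨i0, hi0⟩ := h0
    have hSne : (Finset.univ.filter (inS x j)).Nonempty :=
      ⟨x i0 (j i0), Finset.mem_filter.2 ⟨Finset.mem_univ _, i0, j i0, by omega, le_rfl, rfl⟩⟩
    obtain ⟨A, hAmem, hAmax⟩ := Finset.exists_max_image _ σ hSne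
    have hA : inS x j A := (Finset.mem_filter.1 hAmem).2
    have hstrict : ∀ b, inS x j b → b ≠ A → σ b + pt b ≤ σ A := by
      intro b hb hbA
      rcases hPF.2.2.1 A b hA hb (fun h => hbA h.symm) with h | h
      · exact h
      · have h2 := hAmax b (Finset.mem_filter.2 ⟨Finset.mem_univ _, hb⟩)
        have h3 := hpt A; omega
    obtain ⟨i, m, hm1, hm2, hAx⟩ := hA
    have hmji : m = j i := by
      by_contra hmm
      have hmlt : m < j i := lt_of_le_of_ne hm2 hmm
      have hc : inS x j (x i (j i)) := ⟨i, j i, by omega, le_rfl, rfl⟩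
      have hcA : x i (j i) ≠ A := by
        intro h
        rw [← hAx] at h
        obtain ⟨_, h2⟩ := hinj i (j i) i m (by omega) (hle i) hm1 (le_trans hm2 (hle i)) h
        omega
      have hpc : prec A (x i (j i)) := hAx ▸ hchain i m (j i) hm1 hmlt (hle i)
      have h1 : σ A ≤ σ (x i (j i)) :=
        hPF.2.2.2 A _ (hAx ▸ ⟨i, m, hm1, hm2, rfl⟩) hc hpc
      have h2 : σ (x i (j i)) + pt (x i (j i)) ≤ σ A := hstrict _ hc hcA
      have h3 := hpt (x i (j i)); omega
    subst hmji
    have hAin : inS x j A := hAx ▸ ⟨i, j i, hm1, le_rfl, rfl⟩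
    have hji : j i ≠ 0 := by omega
    have hfree : ¬∃ i' m', i' ≠ i ∧ 1 ≤ m' ∧ m' ≤ j i' ∧ prec (x i (j i)) (x i' m') := by
      rintro ⟨i', m', hii, h1, h2, hp⟩
      have hc : inS x j (x i' m') := ⟨i', m', h1, h2, rfl⟩
      have hcA : x i' m' ≠ A := by
        intro h; rw [← hAx] at h
        exact hii (hinj i' m' i (j i) h1 (le_trans h2 (hle i')) hm1 (hle i) h).1
      have h3 : σ A ≤ σ (x i' m') := hPF.2.2.2 A _ hAin hc (hAx ▸ hp)
      have h4 := hstrict _ hc hcA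
      have h5 := hpt (x i' m'); omega
    set j' := Function.update j i (j i - 1) with hj'
    have hsum' : ∑ m, j' m < n := by
      rw [← hsum]
      apply Finset.sum_lt_sum
      · intro m' _
        rcases eq_or_ne m' i with rfl | h
        · simp only [hj', Function.update_self]; omega
        · simp [hj', Function.update_of_ne h]
      · exact ⟨i, Finset.mem_univ _, by simp only [hj', Function.update_self]; omega⟩
    have hle' : ∀ m', j' m' ≤ L m' := by
      intro m'; rcases eq_or_ne m' i with rfl | h
      · simp only [hj', Function.update_self]
        exact le_trans (by omega) (hle m')
      · simpa [hj', Function.update_of_ne h] using hle m'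
    have hPF' : PFeas prec r pt d x j' σ := by
      obtain ⟨p1, p2, p3, p4⟩ := hPF
      exact ⟨fun b hb => p1 b (inS_update_mono x j i b hb),
        fun b hb => p2 b (inS_update_mono x j i b hb),
        fun b c hb hc => p3 b c (inS_update_mono x j i b hb) (inS_update_mono x j i c hc),
        fun b c hb hc => p4 b c (inS_update_mono x j i b hb) (inS_update_mono x j i c hc)⟩
    have hIH := IH _ hsum' j' rfl hle' σ hPF'
    have hAne : ∀ b, inS x j' b → b ≠ A := by
      intro b hb heq
      rw [← hAx] at heq
      exact not_inS_update x L hinj j hle i hji (heq ▸ hb)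
    have hpm' : pmak pt x j' σ ≤ σ A := by
      apply Finset.sup_le
      intro b hb
      have hb' := (Finset.mem_filter.1 hb).2
      exact hstrict b (inS_update_mono x j i b hb') (hAne b hb')
    have hdead : σ A + pt A ≤ d A := hPF.2.1 A hAin
    have hrA : r A ≤ σ A := hPF.1 A hAin
    have hmaxle : max (DP' prec r pt d x j') ((r (x i (j i)) : ℕ) : ℕ∞) ≤ ((σ A : ℕ) : ℕ∞) := by
      apply max_le
      · exact le_trans hIH (by exact_mod_cast hpm')
      · rw [hAx]; exact_mod_cast hrA
    have hd' : max (DP' prec r pt d x j') ((r (x i (j i)) : ℕ) : ℕ∞)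
        + (pt (x i (j i)) : ℕ∞) ≤ (d (x i (j i)) : ℕ∞) := by
      rw [hAx]
      refine le_trans (add_le_add_left (hAx ▸ hmaxle) _) ?_
      exact_mod_cast hdead
    refine le_trans (DP'_le_step prec r pt d x j i hji hfree hd') ?_
    rw [hAx]
    refine le_trans (add_le_add_left (hAx ▸ hmaxle) ((pt A : ℕ∞))) ?_
    have hsup : σ A + pt A ≤ pmak pt x j σ :=
      Finset.le_sup (f := fun b => σ b + pt b) (Finset.mem_filter.2 ⟨Finset.mem_univ _, hAin⟩)
    calc ((σ A : ℕ) : ℕ∞) + (pt A : ℕ∞) = ((σ A + pt A : ℕ) : ℕ∞) := by push_cast; ring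
      _ ≤ (pmak pt x j σ : ℕ∞) := by exact_mod_cast hsup

/-- Correctness of the restricted DP over a chain decomposition of a strict
partial order: `DP'(|Q₁|,…,|Q_k|)` is finite iff `J` admits a feasible
schedule, and in that case it equals the minimum makespan over all feasible
schedules of `J`. -/
theorem DP'_correct {J : Type*} [Fintype J] {k : ℕ}
    (prec : J → J → Prop)
    (hirr : ∀ a, ¬prec a a)
    (htrans : ∀ a b c, prec a b → prec b c → prec a c)
    (r pt d : J → ℕ) (hpt : ∀ a, 1 ≤ pt a)
    (L : Fin k → ℕ) (x : Fin k → ℕ → J)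
    (hchain : ∀ i m m', 1 ≤ m → m < m' → m' ≤ L i → prec (x i m) (x i m'))
    (hinj : ∀ i m i' m', 1 ≤ m → m ≤ L i → 1 ≤ m' → m' ≤ L i' →
      x i m = x i' m' → i = i' ∧ m = m')
    (hsurj : ∀ a : J, ∃ i m, 1 ≤ m ∧ m ≤ L i ∧ x i m = a) :
    (DP' prec r pt d x L ≠ ⊤ ↔ ∃ σ : J → ℕ, Feasible prec r pt d σ) ∧
    (DP' prec r pt d x L ≠ ⊤ →
      ∃ σ : J → ℕ, Feasible prec r pt d σ ∧
        (makespan pt σ : ℕ∞) = DP' prec r pt d x L ∧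
        ∀ σ' : J → ℕ, Feasible prec r pt d σ' →
          makespan pt σ ≤ makespan pt σ') := by
  have hS : ∀ a, inS x L a := fun a => hsurj a
  have hPF_iff : ∀ σ : J → ℕ, PFeas prec r pt d x L σ ↔ Feasible prec r pt d σ := by
    intro σ
    constructor
    · rintro ⟨p1, p2, p3, p4⟩
      exact ⟨fun a => p1 a (hS a), fun a => p2 a (hS a),
        fun a b => p3 a b (hS a) (hS b), fun a b => p4 a b (hS a) (hS b)⟩
    · rintro ⟨p1, p2, p3, p4⟩
      exact ⟨fun a _ => p1 a, fun a _ => p2 a,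
        fun a b _ _ => p3 a b, fun a b _ _ => p4 a b⟩
  have hmak_eq : ∀ σ : J → ℕ, pmak pt x L σ = makespan pt σ := by
    intro σ
    rw [pmak, makespan, Finset.filter_true_of_mem (fun a _ => hS a)]
  constructor
  · constructor
    · intro hne
      obtain ⟨σ, hPF, _⟩ :=
        soundA prec hirr htrans r pt d hpt L x hchain hinj _ L rfl (fun _ => le_rfl) hne
      exact ⟨σ, (hPF_iff σ).1 hPF⟩
    · rintro ⟨σ, hF⟩ htop
      have h := lowerB prec r pt d hpt L x hchain hinj _ L rfl (fun _ => le_rfl) σ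
        ((hPF_iff σ).2 hF)
      rw [htop] at h
      simp at h
  · intro hne
    obtain ⟨σ, hPF, hmk⟩ :=
      soundA prec hirr htrans r pt d hpt L x hchain hinj _ L rfl (fun _ => le_rfl) hne
    refine ⟨σ, (hPF_iff σ).1 hPF, ?_, ?_⟩
    · rw [← hmak_eq σ]; exact hmk
    · intro σ' hF'
      have h1 := lowerB prec r pt d hpt L x hchain hinj _ L rfl (fun _ => le_rfl) σ'
        ((hPF_iff σ').2 hF')
      have h2 : ((makespan pt σ : ℕ) : ℕ∞) ≤ ((makespan pt σ' : ℕ) : ℕ∞) := by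
        rw [← hmak_eq σ, ← hmak_eq σ']
        exact le_trans (le_of_eq hmk) h1
      exact_mod_cast h2

end WidthDP
end

section
/- Let J = Q_1 ∪ ⋯ ∪ Q_k be a disjoint union of k precedence chains such that within each chain Q all jobs share a common release time r_Q, a common deadline d_Q, and a common processing time p_Q. Then, for every t ∈ ℕ, there exists a feasible schedule of J (respecting the chain precedences) with makespan t if and only if there exists a schedule of J satisfying only the release-time, deadline and non-overlap constraints (ignoring the precedences) with makespan t. In particular, J admits a feasible schedule if and only if it admits a schedule satisfying the release-time, deadline and non-overlap constraints. -/
namespace UniformChains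

/-- The job set of `k` chains, chain `i` consisting of `L i` jobs. -/
abbrev Job {k : ℕ} (L : Fin k → ℕ) : Type := Σ i : Fin k, Fin (L i)

/-- A schedule satisfying only the release-time, deadline and non-overlap
constraints, where all jobs of chain `i` share release time `rQ i`,
deadline `dQ i` and processing time `pQ i`. -/
def FeasBase {k : ℕ} {L : Fin k → ℕ} (rQ dQ pQ : Fin k → ℕ)
    (σ : Job L → ℕ) : Prop :=
  (∀ x : Job L, rQ x.1 ≤ σ x) ∧
  (∀ x : Job L, σ x + pQ x.1 ≤ dQ x.1) ∧
  (∀ x y : Job L, x ≠ y → σ y + pQ y.1 ≤ σ x ∨ σ x + pQ x.1 ≤ σ y)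

/-- A feasible schedule: additionally the chain precedences are respected. -/
def Feasible {k : ℕ} {L : Fin k → ℕ} (rQ dQ pQ : Fin k → ℕ)
    (σ : Job L → ℕ) : Prop :=
  FeasBase rQ dQ pQ σ ∧
  ∀ x y : Job L, x.1 = y.1 → (x.2 : ℕ) < (y.2 : ℕ) → σ x ≤ σ y

/-- The makespan of a schedule. -/
def makespan {k : ℕ} {L : Fin k → ℕ} (pQ : Fin k → ℕ) (σ : Job L → ℕ) : ℕ :=
  Finset.univ.sup fun x : Job L => σ x + pQ x.1

theorem base_to_feasible {k : ℕ} {L : Fin k → ℕ} (rQ dQ pQ : Fin k → ℕ)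
    (σ : Job L → ℕ) (h : FeasBase rQ dQ pQ σ) :
    ∃ τ : Job L → ℕ, Feasible rQ dQ pQ τ ∧ makespan pQ τ = makespan pQ σ := by
  classical
  obtain ⟨hr, hd, hn⟩ := h
  let π : Job L ≃ Job L :=
    Equiv.sigmaCongrRight (fun i => Tuple.sort (fun j : Fin (L i) => σ ⟨i, j⟩))
  refine ⟨σ ∘ π, ⟨⟨?_, ?_, ?_⟩, ?_⟩, ?_⟩
  · intro x
    have := hr (π x)
    simpa [π, Equiv.sigmaCongrRight] using this
  · intro x
    have := hd (π x)
    simpa [π, Equiv.sigmaCongrRight] using this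
  · intro x y hxy
    have hπ : π x ≠ π y := fun h => hxy (π.injective h)
    have := hn (π x) (π y) hπ
    have h1 : (π x).1 = x.1 := rfl
    have h2 : (π y).1 = y.1 := rfl
    simpa [h1, h2] using this
  · rintro ⟨i, a⟩ ⟨i', b⟩ (h1 : i = i') h2
    subst h1
    exact Tuple.monotone_sort (fun j : Fin (L i) => σ ⟨i, j⟩) (le_of_lt h2)
  · unfold makespan
    apply le_antisymm
    · apply Finset.sup_le
      intro x _
      have h1 : (π x).1 = x.1 := rfl
      calc (σ ∘ π) x + pQ x.1 = σ (π x) + pQ (π x).1 := by rw [h1]; rfl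
        _ ≤ _ := Finset.le_sup (f := fun y : Job L => σ y + pQ y.1)
            (Finset.mem_univ (π x))
    · apply Finset.sup_le
      intro x _
      have h2 : (π.symm x).1 = x.1 := by
        show (π (π.symm x)).1 = x.1
        rw [Equiv.apply_symm_apply]
      calc σ x + pQ x.1 = σ (π (π.symm x)) + pQ (π.symm x).1 := by
            rw [Equiv.apply_symm_apply, h2]
        _ ≤ _ := Finset.le_sup (f := fun y : Job L => (σ ∘ π) y + pQ y.1)
            (Finset.mem_univ (π.symm x))

/-- For chain-uniform release times, deadlines and processing times, the
precedence constraints are immaterial: for every `t` there is a feasible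
schedule (respecting the chain precedences) of makespan `t` iff there is a
schedule satisfying only the release-time, deadline and non-overlap
constraints of makespan `t`; in particular, a feasible schedule exists iff a
schedule satisfying the release-time, deadline and non-overlap constraints
exists. -/
theorem feasible_iff_feasBase {k : ℕ} (L : Fin k → ℕ)
    (rQ dQ pQ : Fin k → ℕ) (hpQ : ∀ i, 1 ≤ pQ i) :
    (∀ t : ℕ,
      (∃ σ : Job L → ℕ, Feasible rQ dQ pQ σ ∧ makespan pQ σ = t) ↔
      (∃ σ : Job L → ℕ, FeasBase rQ dQ pQ σ ∧ makespan pQ σ = t)) ∧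
    ((∃ σ : Job L → ℕ, Feasible rQ dQ pQ σ) ↔
      (∃ σ : Job L → ℕ, FeasBase rQ dQ pQ σ)) := by
  constructor
  · intro t
    constructor
    · rintro ⟨σ, hσ, hm⟩
      exact ⟨σ, hσ.1, hm⟩
    · rintro ⟨σ, hσ, hm⟩
      obtain ⟨τ, hτ, hmt⟩ := base_to_feasible rQ dQ pQ σ hσ
      exact ⟨τ, hτ, hmt.trans hm⟩
  · constructor
    · rintro ⟨σ, hσ⟩
      exact ⟨σ, hσ.1⟩
    · rintro ⟨σ, hσ⟩
      obtain ⟨τ, hτ, _⟩ := base_to_feasible rQ dQ pQ σ hσ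
      exact ⟨τ, hτ⟩

end UniformChains
end

section
/- Let J be a finite set of jobs with release times, processing times (≥ 1) and deadlines in ℕ, and let σ be a schedule satisfying the release-time, deadline and non-overlap constraints. Let i, j ∈ J be two jobs with p_i = p_j, r_i ≤ r_j and d_i ≤ d_j such that σ_j < σ_i. Then the schedule σ′ obtained from σ by swapping the start times of i and j (σ′_i = σ_j, σ′_j = σ_i, and σ′_k = σ_k for all other jobs k) also satisfies the release-time, deadline and non-overlap constraints and has the same makespan as σ. -/
/-- Swapping the start times of two jobs `i`, `j` with equal processing
times, `r i ≤ r j`, `d i ≤ d j` and `σ j < σ i` preserves the release-time,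
deadline and non-overlap constraints as well as the makespan. -/
theorem swap_preserves_feasibility {J : Type*} [Fintype J] [DecidableEq J]
    (r pt d σ : J → ℕ) (hpt : ∀ a, 1 ≤ pt a)
    (hr : ∀ a, r a ≤ σ a) (hd : ∀ a, σ a + pt a ≤ d a)
    (hno : ∀ a b, a ≠ b → σ b + pt b ≤ σ a ∨ σ a + pt a ≤ σ b)
    (i j : J) (hp : pt i = pt j) (hrij : r i ≤ r j) (hdij : d i ≤ d j)
    (hij : σ j < σ i)
    (σ' : J → ℕ) (hσ' : σ' = Function.update (Function.update σ i (σ j)) j (σ i)) :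
    (∀ a, r a ≤ σ' a) ∧ (∀ a, σ' a + pt a ≤ d a) ∧
    (∀ a b, a ≠ b → σ' b + pt b ≤ σ' a ∨ σ' a + pt a ≤ σ' b) ∧
    (Finset.univ.sup fun a => σ' a + pt a) =
      (Finset.univ.sup fun a => σ a + pt a) := by
  have hne : i ≠ j := fun h => absurd hij (by simp [h])
  have hσi : σ' i = σ j := by simp [hσ', Function.update, hne]
  have hσj : σ' j = σ i := by simp [hσ', Function.update]
  have hσo : ∀ a, a ≠ i → a ≠ j → σ' a = σ a := by
    intro a hai haj; simp [hσ', Function.update, hai, haj]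
  have hswap : ∀ a, σ' a = σ (Equiv.swap i j a) := by
    intro a
    rcases eq_or_ne a i with rfl | hai
    · simpa [Equiv.swap_apply_left] using hσi
    rcases eq_or_ne a j with rfl | haj
    · simpa [Equiv.swap_apply_right] using hσj
    · rw [Equiv.swap_apply_of_ne_of_ne hai haj]; exact hσo a hai haj
  have hptswap : ∀ a, pt a = pt (Equiv.swap i j a) := by
    intro a
    rcases eq_or_ne a i with rfl | hai
    · simpa [Equiv.swap_apply_left] using hp
    rcases eq_or_ne a j with rfl | haj
    · simpa [Equiv.swap_apply_right] using hp.symm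
    · rw [Equiv.swap_apply_of_ne_of_ne hai haj]
  refine ⟨?_, ?_, ?_, ?_⟩
  · intro a
    rcases eq_or_ne a i with rfl | hai
    · rw [hσi]; exact hrij.trans (hr j)
    rcases eq_or_ne a j with rfl | haj
    · rw [hσj]; exact (hr a).trans (le_of_lt hij)
    · rw [hσo a hai haj]; exact hr a
  · intro a
    rcases eq_or_ne a i with rfl | hai
    · rw [hσi]; have h1 := hd a; omega
    rcases eq_or_ne a j with rfl | haj
    · rw [hσj, ← hp]; exact (hd i).trans hdij
    · rw [hσo a hai haj]; exact hd a
  · intro a b hab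
    rw [hswap a, hswap b, hptswap a, hptswap b]
    exact hno _ _ (fun h => hab ((Equiv.swap i j).injective h))
  · have : (fun a => σ' a + pt a) = (fun a => σ a + pt a) ∘ (Equiv.swap i j) := by
      funext a; simp [hswap a, hptswap a]
    rw [this,
      show ((fun a => σ a + pt a) ∘ ⇑(Equiv.swap i j)) =
        ((fun a => σ a + pt a) ∘ ⇑(Equiv.swap i j).toEmbedding) from rfl,
      ← Finset.sup_map, Finset.map_univ_equiv]
end

section
/- Let J be a finite set of jobs with release times r_j ∈ ℕ, processing times p_j ∈ ℕ with p_j ≥ 1 and deadlines d_j ∈ ℕ, and let σ be any schedule of J satisfying σ_j ≥ r_j for all j and the non-overlap constraint. Let J′ ⊆ J be a nonempty subset and D an integer with d_k ≤ D for every k ∈ J′. Then the maximum lateness of σ satisfies max_{j∈J}(σ_j + p_j − d_j) ≥ min_{k∈J′} r_k + Σ_{k∈J′} p_k − D. -/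
/-- For any schedule respecting release times and non-overlap, any nonempty
subset `J'` of jobs and any integer `D` upper-bounding the deadlines of
the jobs in `J'`, the maximum lateness is at least
`min_{k∈J'} r_k + Σ_{k∈J'} p_k − D`. -/
theorem max_lateness_lower_bound {J : Type*} [Fintype J] [Nonempty J]
    (r pt d σ : J → ℕ) (hpt : ∀ a, 1 ≤ pt a)
    (hr : ∀ a, r a ≤ σ a)
    (hno : ∀ a b, a ≠ b → σ b + pt b ≤ σ a ∨ σ a + pt a ≤ σ b)
    (J' : Finset J) (hJ' : J'.Nonempty) (D : ℤ)
    (hD : ∀ a ∈ J', (d a : ℤ) ≤ D) :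
    (J'.inf' hJ' fun a => (r a : ℤ)) + (∑ a ∈ J', (pt a : ℤ)) - D ≤
      Finset.univ.sup' Finset.univ_nonempty
        fun a : J => (σ a : ℤ) + (pt a : ℤ) - (d a : ℤ) := by
  classical
  set m : ℕ := J'.inf' hJ' r with hm
  set C : ℕ := J'.sup' hJ' (fun a => σ a + pt a) with hC
  -- the intervals are pairwise disjoint
  have hdisj : (J' : Set J).PairwiseDisjoint
      (fun a => Finset.Ico (σ a) (σ a + pt a)) := by
    intro a _ b _ hab
    simp only [Function.onFun, Finset.disjoint_left, Finset.mem_Ico]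
    rcases hno a b hab with h | h <;> omega
  have hsub : J'.biUnion (fun a => Finset.Ico (σ a) (σ a + pt a)) ⊆
      Finset.Ico m C := by
    intro x hx
    rcases Finset.mem_biUnion.1 hx with ⟨a, ha, hxa⟩
    rw [Finset.mem_Ico] at hxa ⊢
    constructor
    · exact le_trans (le_trans (Finset.inf'_le r ha) (hr a)) hxa.1
    · exact lt_of_lt_of_le hxa.2 (Finset.le_sup' (fun a => σ a + pt a) ha)
  have hsum : ∑ a ∈ J', pt a ≤ C - m := by
    have h1 : ∑ a ∈ J', pt a =
        (J'.biUnion (fun a => Finset.Ico (σ a) (σ a + pt a))).card := by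
      rw [Finset.card_biUnion (fun a ha b hb hab => hdisj ha hb hab)]
      simp [Nat.card_Ico]
    rw [h1]
    calc _ ≤ (Finset.Ico m C).card := Finset.card_le_card hsub
      _ = C - m := Nat.card_Ico m C
  obtain ⟨k, hk⟩ := id hJ'
  have hmC : m ≤ C :=
    le_trans (Finset.inf'_le r hk)
      (le_trans (le_trans (hr k) (Nat.le_add_right _ _)) (Finset.le_sup' (fun a => σ a + pt a) hk))
  have hkey : m + ∑ a ∈ J', pt a ≤ C := by omega
  -- pick the job attaining the sup
  obtain ⟨b, hb, hbC⟩ := Finset.exists_mem_eq_sup' hJ' (fun a => σ a + pt a)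
  have h2 : (J'.inf' hJ' fun a => (r a : ℤ)) ≤ (m : ℤ) := by
    obtain ⟨a, ha, haeq⟩ := Finset.exists_mem_eq_inf' hJ' r
    calc (J'.inf' hJ' fun a => (r a : ℤ)) ≤ (r a : ℤ) :=
          Finset.inf'_le (fun a => (r a : ℤ)) ha
      _ = (m : ℤ) := by rw [hm, haeq]
  have h3 : ((σ b : ℤ) + (pt b : ℤ) - (d b : ℤ)) ≤
      Finset.univ.sup' Finset.univ_nonempty
        fun a : J => (σ a : ℤ) + (pt a : ℤ) - (d a : ℤ) :=
    Finset.le_sup' (fun a : J => (σ a : ℤ) + (pt a : ℤ) - (d a : ℤ)) (Finset.mem_univ b)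
  have hCb : (C : ℤ) = (σ b : ℤ) + (pt b : ℤ) := by
    rw [hC, hbC]; push_cast; ring
  have hsum' : (m : ℤ) + ∑ a ∈ J', (pt a : ℤ) ≤ (C : ℤ) := by
    rw [← Nat.cast_sum]; exact_mod_cast hkey
  have hdb : (d b : ℤ) ≤ D := hD b hb
  linarith [h2, h3, hsum', hdb, hCb.le, hCb.ge]
end

section
/- Let J be a finite nonempty set of n jobs with release times r_j ∈ ℕ, processing times p_j ∈ ℕ with p_j ≥ 1 and deadlines d_j ∈ ℕ, let σ be any EDD schedule of J, and let σ* be any schedule of J satisfying σ*_j ≥ r_j for all j and the non-overlap constraint. Then max_{j∈J}(σ_j + p_j − d_j) ≤ max_{j∈J}(σ*_j + p_j − d_j) + p_max − 1, where p_max = max_{j∈J} p_j. -/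
/-- `σ` is an EDD (earliest-deadline-first list) schedule of the jobs:
there is an ordering `e 0, e 1, …, e (n-1)` of all jobs and start times
`s m` defined by `C 0 = 0`, `s m = max (C m) (min_{m' ≥ m} r (e m'))`,
`C (m+1) = s m + pt (e m)`, such that `σ (e m) = s m`, every started job is
released (`r (e m) ≤ s m`), and among released unscheduled jobs one with
smallest deadline is started (`m < m'` and `r (e m') ≤ s m` imply
`d (e m) ≤ d (e m')`). -/
def IsEDD {J : Type*} [Fintype J] (r pt d : J → ℕ) (σ : J → ℕ) : Prop :=
  ∃ (n : ℕ) (e : Fin n ≃ J) (s : Fin n → ℕ) (C : ℕ → ℕ),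
    C 0 = 0 ∧
    (∀ m : Fin n, s m = max (C m.val)
      ((Finset.univ.filter fun m' : Fin n => m ≤ m').inf'
        ⟨m, by simp⟩ fun m' => r (e m'))) ∧
    (∀ m : Fin n, C (m.val + 1) = s m + pt (e m)) ∧
    (∀ m : Fin n, σ (e m) = s m) ∧
    (∀ m : Fin n, r (e m) ≤ s m) ∧
    (∀ m m' : Fin n, m < m' → r (e m') ≤ s m → d (e m) ≤ d (e m'))

open Finset in
lemma opt_lb {J : Type*} [DecidableEq J] (pt : J → ℕ) (hpt : ∀ a, 1 ≤ pt a) (σstar : J → ℕ)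
    (hno : ∀ a b, a ≠ b → σstar b + pt b ≤ σstar a ∨ σstar a + pt a ≤ σstar b)
    (t : ℕ) : ∀ Q : Finset J, Q.Nonempty → (∀ q ∈ Q, t ≤ σstar q) →
    ∃ q ∈ Q, t + ∑ b ∈ Q, pt b ≤ σstar q + pt q := by
  intro Q
  induction Q using Finset.strongInduction with
  | _ Q ih =>
    intro hQ ht
    obtain ⟨q, hqQ, hqmax⟩ := Finset.exists_max_image Q σstar hQ
    by_cases h : (Q.erase q).Nonempty
    · obtain ⟨q', hq'Q, hq'le⟩ := ih (Q.erase q) (Finset.erase_ssubset hqQ) h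
        (fun b hb => ht b (Finset.mem_of_mem_erase hb))
      have hne : q' ≠ q := Finset.ne_of_mem_erase hq'Q
      have hle : σstar q' + pt q' ≤ σstar q := by
        rcases hno q q' hne.symm with h1 | h1
        · exact h1
        · have := hqmax q' (Finset.mem_of_mem_erase hq'Q)
          have := hpt q
          omega
      have hsum : ∑ b ∈ Q.erase q, pt b + pt q = ∑ b ∈ Q, pt b :=
        Finset.sum_erase_add _ _ hqQ
      exact ⟨q, hqQ, by omega⟩
    · have hQs : Q = {q} := by
        apply Finset.eq_singleton_iff_unique_mem.mpr
        refine ⟨hqQ, fun b hb => ?_⟩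
        by_contra hb'
        exact h ⟨b, Finset.mem_erase.mpr ⟨hb', hb⟩⟩
      refine ⟨q, hqQ, ?_⟩
      rw [hQs, Finset.sum_singleton]
      have := ht q hqQ
      omega


/-- On a single machine, the maximum lateness of an EDD schedule exceeds the
maximum lateness of any schedule respecting release times and non-overlap by
at most `p_max − 1`. -/
theorem EDD_max_lateness {J : Type*} [Fintype J] [Nonempty J]
    (r pt d : J → ℕ) (hpt : ∀ a, 1 ≤ pt a)
    (σ : J → ℕ) (hEDD : IsEDD r pt d σ)
    (σstar : J → ℕ) (hrstar : ∀ a, r a ≤ σstar a)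
    (hnostar : ∀ a b, a ≠ b →
      σstar b + pt b ≤ σstar a ∨ σstar a + pt a ≤ σstar b) :
    (Finset.univ.sup' Finset.univ_nonempty
        fun a : J => (σ a : ℤ) + (pt a : ℤ) - (d a : ℤ)) ≤
      (Finset.univ.sup' Finset.univ_nonempty
        fun a : J => (σstar a : ℤ) + (pt a : ℤ) - (d a : ℤ)) +
      (Finset.univ.sup' Finset.univ_nonempty fun a : J => (pt a : ℤ)) - 1 := by
  classical
  obtain ⟨n, e, s, C, h0, hs, hCdef, hσ, hrel, hd⟩ := hEDD
  set f : ℕ → ℕ := fun v => if h : v < n then pt (e ⟨v, h⟩) else 0 with hf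
  have hconv : ∀ lo hi : Fin n,
      ∑ k ∈ Finset.Icc lo hi, pt (e k) = ∑ v ∈ Finset.Icc lo.val hi.val, f v := by
    intro lo hi
    rw [← Fin.map_valEmbedding_Icc, Finset.sum_map]
    apply Finset.sum_congr rfl
    intro k _
    simp [hf, k.isLt]
  -- critical job
  obtain ⟨j0, -, hj0⟩ := Finset.exists_mem_eq_sup' Finset.univ_nonempty
    (fun a : J => (σ a : ℤ) + (pt a : ℤ) - (d a : ℤ))
  set m : Fin n := e.symm j0 with hm
  have hem : e m = j0 := e.apply_symm_apply j0
  have hsC : ∀ k : Fin n, C k.val ≤ s k := fun k => by rw [hs k]; exact le_max_left _ _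
  -- find start of busy segment
  have hP : ∃ v, v ≤ m.val ∧ ∀ k : Fin n, v < k.val → k.val ≤ m.val → s k = C k.val :=
    ⟨m.val, le_refl _, fun k h1 h2 => absurd h1 (by omega)⟩
  obtain ⟨a0, ⟨ha0m, hseg⟩, hmin⟩ :
      ∃ a0, (a0 ≤ m.val ∧ ∀ k : Fin n, a0 < k.val → k.val ≤ m.val → s k = C k.val) ∧
        ∀ v, v < a0 →
          ¬(v ≤ m.val ∧ ∀ k : Fin n, v < k.val → k.val ≤ m.val → s k = C k.val) :=
    ⟨Nat.find hP, Nat.find_spec hP, fun v hv => Nat.find_min hP hv⟩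
  have han : a0 < n := lt_of_le_of_lt ha0m m.isLt
  set a : Fin n := ⟨a0, han⟩ with ha
  have haval : a.val = a0 := rfl
  have ham : a ≤ m := ha0m
  -- s a is at most any remaining release time
  have hsa : ∀ k : Fin n, a ≤ k → s a ≤ r (e k) := by
    intro k hk
    have h2 : ((Finset.univ.filter fun m' : Fin n => a ≤ m').inf'
        ⟨a, by simp⟩ fun m' => r (e m')) ≤ r (e k) :=
      Finset.inf'_le (fun m' => r (e m'))
        (Finset.mem_filter.mpr ⟨Finset.mem_univ k, hk⟩)
    have h1 := hs a
    rcases le_total (C a.val) ((Finset.univ.filter fun m' : Fin n => a ≤ m').inf'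
        ⟨a, by simp⟩ fun m' => r (e m')) with hle | hle
    · rw [h1, max_eq_right hle]; exact h2
    · rw [h1, max_eq_left hle]
      rcases Nat.eq_zero_or_pos a0 with hz | hpos
      · have hC0 : C a.val = 0 := by
          have : a.val = 0 := hz
          rw [this, h0]
        omega
      · exfalso
        have hnot := hmin (a0 - 1) (by omega)
        push_neg at hnot
        obtain ⟨k', hk1, hk2, hk3⟩ := hnot (by omega)
        have hka : k' = a := Fin.ext (show k'.val = a.val by
          rw [haval]
          by_contra hne
          exact hk3 (hseg k' (by omega) hk2))
        rw [hka] at hk3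
        exact hk3 (by rw [h1, max_eq_left hle])
  -- no idle in the busy segment: completion formula
  have hsum : ∀ v, a0 ≤ v → v ≤ m.val → C (v+1) = s a + ∑ k ∈ Finset.Icc a0 v, f k := by
    intro v hav
    induction v, hav using Nat.le_induction with
    | base =>
      intro _
      have h1 : C (a0+1) = s a + pt (e a) := hCdef a
      rw [Finset.Icc_self, Finset.sum_singleton]
      have hfa : f a0 = pt (e a) := dif_pos han
      omega
    | succ v hav ih =>
      intro hvm
      have hv1 : v + 1 < n := by omega
      have h1 : C (v+1+1) = s ⟨v+1,hv1⟩ + pt (e ⟨v+1,hv1⟩) := hCdef ⟨v+1,hv1⟩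
      have h2 : s ⟨v+1,hv1⟩ = C (v+1) :=
        hseg ⟨v+1,hv1⟩ (show a0 < v+1 by omega) (show v+1 ≤ m.val by omega)
      rw [Finset.sum_Icc_succ_top (by omega : a0 ≤ v + 1)]
      have hfv : f (v+1) = pt (e ⟨v+1,hv1⟩) := dif_pos hv1
      have ihv := ih (by omega)
      omega
  have hCm : C (m.val+1) = s m + pt (e m) := hCdef m
  have hCm2 : C (m.val+1) = s a + ∑ v ∈ Finset.Icc a0 m.val, f v :=
    hsum m.val ha0m (le_refl _)
  -- interference set
  set I : Finset (Fin n) := (Finset.Icc a m).filter (fun i => d (e m) < d (e i)) with hI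
  rw [hj0, ← hem, hσ m]
  by_cases hIe : I = ∅
  · -- Case A: no interference job
    set Q : Finset J := (Finset.Icc a m).image e with hQ
    have hmQ : e m ∈ Q := Finset.mem_image_of_mem e (Finset.mem_Icc.mpr ⟨ham, le_refl m⟩)
    have ht : ∀ q ∈ Q, s a ≤ σstar q := by
      intro q hq
      obtain ⟨k, hk, rfl⟩ := Finset.mem_image.mp hq
      exact le_trans (hsa k (Finset.mem_Icc.mp hk).1) (hrstar (e k))
    obtain ⟨q, hqQ, hql⟩ := opt_lb pt hpt σstar hnostar (s a) Q ⟨e m, hmQ⟩ ht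
    have hsumQ : ∑ b ∈ Q, pt b = ∑ v ∈ Finset.Icc a0 m.val, f v := by
      rw [hQ, Finset.sum_image (fun x _ y _ h => e.injective h)]
      exact hconv a m
    have hdq : d q ≤ d (e m) := by
      obtain ⟨k, hk, rfl⟩ := Finset.mem_image.mp hqQ
      by_contra hlt
      have : k ∈ I := Finset.mem_filter.mpr ⟨hk, by omega⟩
      rw [hIe] at this
      exact absurd this (Finset.notMem_empty k)
    -- final arithmetic
    have key : s m + pt (e m) ≤ σstar q + pt q := by omega
    have c1 : (s m : ℤ) + pt (e m) ≤ (σstar q : ℤ) + pt q := by exact_mod_cast key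
    have c2 : (d q : ℤ) ≤ d (e m) := by exact_mod_cast hdq
    have c3 : (σstar q : ℤ) + pt q - d q ≤
        Finset.univ.sup' Finset.univ_nonempty
          fun a : J => (σstar a : ℤ) + (pt a : ℤ) - (d a : ℤ) := by
      exact Finset.le_sup'
        (f := fun a : J => (σstar a : ℤ) + (pt a : ℤ) - (d a : ℤ)) (Finset.mem_univ q)
    have c4 : (1 : ℤ) ≤ Finset.univ.sup' Finset.univ_nonempty fun a : J => (pt a : ℤ) := by
      have h2 : ((fun a : J => (pt a : ℤ)) q) ≤
          Finset.univ.sup' Finset.univ_nonempty fun a : J => (pt a : ℤ) :=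
        Finset.le_sup' (f := fun a : J => (pt a : ℤ)) (Finset.mem_univ q)
      have h1 : (1:ℤ) ≤ pt q := by exact_mod_cast hpt q
      exact le_trans h1 h2
    linarith
  · -- Case B: interference job exists
    have hIne : I.Nonempty := Finset.nonempty_iff_ne_empty.mpr hIe
    set i : Fin n := I.max' hIne with hi
    have hiI : i ∈ I := I.max'_mem hIne
    have hmaxI : ∀ k ∈ I, k ≤ i := fun k hk => I.le_max' k hk
    obtain ⟨hiIcc, hdi⟩ := Finset.mem_filter.mp hiI
    obtain ⟨hai, him⟩ := Finset.mem_Icc.mp hiIcc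
    have hine : i ≠ m := fun h => by rw [h] at hdi; omega
    have hilt : i.val < m.val := Fin.lt_def.mp (lt_of_le_of_ne him hine)
    have hi1n : i.val + 1 < n := by omega
    set i1 : Fin n := ⟨i.val + 1, hi1n⟩ with hi1
    have hi1val : i1.val = i.val + 1 := rfl
    have hi1m : i1 ≤ m := hilt
    -- jobs in (i, m] are released strictly after s i
    have hrk : ∀ k : Fin n, i1 ≤ k → k ≤ m → s i + 1 ≤ r (e k) := by
      intro k hk1 hk2
      by_contra hcon
      have hrks : r (e k) ≤ s i := by omega
      have hik : i < k := lt_of_lt_of_le (show i < i1 from Nat.lt_succ_self i.val) hk1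
      have hdik : d (e i) ≤ d (e k) := hd i k hik hrks
      have hkI : k ∈ I := Finset.mem_filter.mpr
        ⟨Finset.mem_Icc.mpr ⟨le_trans hai (le_of_lt hik), hk2⟩, by omega⟩
      exact absurd (hmaxI k hkI) (not_le.mpr hik)
    set Q : Finset J := (Finset.Icc i1 m).image e with hQ
    have hmQ : e m ∈ Q := Finset.mem_image_of_mem e (Finset.mem_Icc.mpr ⟨hi1m, le_refl m⟩)
    have ht : ∀ q ∈ Q, s i + 1 ≤ σstar q := by
      intro q hq
      obtain ⟨k, hk, rfl⟩ := Finset.mem_image.mp hq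
      obtain ⟨hk1, hk2⟩ := Finset.mem_Icc.mp hk
      exact le_trans (hrk k hk1 hk2) (hrstar (e k))
    obtain ⟨q, hqQ, hql⟩ := opt_lb pt hpt σstar hnostar (s i + 1) Q ⟨e m, hmQ⟩ ht
    have hsumQ : ∑ b ∈ Q, pt b = ∑ v ∈ Finset.Icc (i.val+1) m.val, f v := by
      rw [hQ, Finset.sum_image (fun x _ y _ h => e.injective h)]
      exact hconv i1 m
    have hdq : d q ≤ d (e m) := by
      obtain ⟨k, hk, rfl⟩ := Finset.mem_image.mp hqQ
      obtain ⟨hk1, hk2⟩ := Finset.mem_Icc.mp hk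
      by_contra hlt
      have hik : i < k := lt_of_lt_of_le (show i < i1 from Nat.lt_succ_self i.val) hk1
      have hkI : k ∈ I := Finset.mem_filter.mpr
        ⟨Finset.mem_Icc.mpr ⟨le_trans hai (le_of_lt hik), hk2⟩, by omega⟩
      exact absurd (hmaxI k hkI) (not_le.mpr hik)
    -- completion of segment up to i
    have hCi : C (i.val+1) = s i + pt (e i) := hCdef i
    have hCi2 : C (i.val+1) = s a + ∑ v ∈ Finset.Icc a0 i.val, f v :=
      hsum i.val hai (le_of_lt hilt)
    have hsplit : ∑ v ∈ Finset.Icc a0 i.val, f v + ∑ v ∈ Finset.Icc (i.val+1) m.val, f v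
        = ∑ v ∈ Finset.Icc a0 m.val, f v := by
      rw [← Finset.Ico_add_one_right_eq_Icc, ← Finset.Ico_add_one_right_eq_Icc, ← Finset.Ico_add_one_right_eq_Icc]
      exact Finset.sum_Ico_consecutive f (by omega) (by omega)
    -- final arithmetic
    have key : s m + pt (e m) + 1 ≤ σstar q + pt q + pt (e i) := by omega
    have c1 : (s m : ℤ) + pt (e m) + 1 ≤ (σstar q : ℤ) + pt q + pt (e i) := by
      exact_mod_cast key
    have c2 : (d q : ℤ) ≤ d (e m) := by exact_mod_cast hdq
    have c3 : (σstar q : ℤ) + pt q - d q ≤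
        Finset.univ.sup' Finset.univ_nonempty
          fun a : J => (σstar a : ℤ) + (pt a : ℤ) - (d a : ℤ) := by
      exact Finset.le_sup'
        (f := fun a : J => (σstar a : ℤ) + (pt a : ℤ) - (d a : ℤ)) (Finset.mem_univ q)
    have c4 : (pt (e i) : ℤ) ≤
        Finset.univ.sup' Finset.univ_nonempty fun a : J => (pt a : ℤ) := by
      exact Finset.le_sup' (f := fun a : J => (pt a : ℤ)) (Finset.mem_univ (e i))
    linarith
end
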